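/- arXiv:2212.12366 — 11 statements merged into one kernel-verified Lean document; each statement's English description precedes it below -/
import Mathlib

section
/- For every α ∈ (0,1) and every φ ∈ (0,π), one has (sin(αφ)/sin(φ))^(α/(1−α)) · (sin((1−α)φ)/sin(φ)) ≥ (1−α) · α^(α/(1−α)). -/
open Real

theorem ConcaveOn.smul_le_apply_smul {𝕜 E β : Type*} [Ring 𝕜] [PartialOrder 𝕜]
    [IsOrderedRing 𝕜] [AddCommGroup E] [Module 𝕜 E] [AddCommGroup β] [PartialOrder β]
    [Module 𝕜 β] {s : Set E} {f : E → β} (hf : ConcaveOn 𝕜 s f) (h0 : (0 : E) ∈ s)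
    (hf0 : f 0 = 0) {x : E} (hx : x ∈ s) {t : 𝕜} (ht : t ∈ Set.Icc 0 1) :
    t • f x ≤ f (t • x) := by
  simpa [hf0] using hf.2 h0 hx (sub_nonneg.2 ht.2) ht.1 (sub_add_cancel 1 t)

theorem Real.mul_sin_le_sin_mul {t x : ℝ} (ht : t ∈ Set.Icc 0 1) (hx : x ∈ Set.Icc 0 π) :
    t * sin x ≤ sin (t * x) :=
  strictConcaveOn_sin_Icc.concaveOn.smul_le_apply_smul ⟨le_rfl, pi_pos.le⟩ sin_zero hx ht

/-- Lemma 5.3(ii): for `α ∈ (0,1)` and `φ ∈ (0,π)`,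
`(sin(αφ)/sin φ)^(α/(1−α)) · (sin((1−α)φ)/sin φ) ≥ (1−α) α^(α/(1−α))`. -/
theorem sin_ratio_rpow_ge
    (α φ : ℝ) (hα : α ∈ Set.Ioo (0:ℝ) 1) (hφ : φ ∈ Set.Ioo 0 Real.pi) :
    (Real.sin (α * φ) / Real.sin φ) ^ (α / (1 - α)) *
        (Real.sin ((1 - α) * φ) / Real.sin φ)
      ≥ (1 - α) * α ^ (α / (1 - α)) := by
  obtain ⟨hα₀, hα₁⟩ := hα
  have hsin : 0 < sin φ := sin_pos_of_pos_of_lt_pi hφ.1 hφ.2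
  have hratio {t : ℝ} (ht : t ∈ Set.Icc 0 1) : t ≤ sin (t * φ) / sin φ :=
    (le_div_iff₀ hsin).2 (mul_sin_le_sin_mul ht (Set.Ioo_subset_Icc_self hφ))
  have hα_ratio := hratio ⟨hα₀.le, hα₁.le⟩
  have h1α_ratio := hratio (t := 1 - α) ⟨by linarith, by linarith⟩
  calc (1 - α) * α ^ (α / (1 - α))
      ≤ sin ((1 - α) * φ) / sin φ * (sin (α * φ) / sin φ) ^ (α / (1 - α)) := by
        gcongr; linarith
    _ = _ := mul_comm _ _
end

section
/- For every α ∈ (0,1) and every x > 0, the M-Wright function satisfies M_α(x) > 0. -/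
/-- The auxiliary kernel in the Mikusiński integral representation of the
M-Wright function: `u_α(φ) = (sin(αφ)/sin φ)^(α/(1−α)) · sin((1−α)φ)/sin φ`. -/
noncomputable def mwrightKernel (α φ : ℝ) : ℝ :=
  (Real.sin (α * φ) / Real.sin φ) ^ (α / (1 - α)) *
    (Real.sin ((1 - α) * φ) / Real.sin φ)

/-- The M-Wright function `M_α`, via its Mikusiński integral representation:
`M_α(x) = (x^(α/(1−α))/(π(1−α))) ∫_0^π u_α(φ) exp(−u_α(φ) x^(1/(1−α))) dφ`. -/
noncomputable def mwright (α x : ℝ) : ℝ :=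
  x ^ (α / (1 - α)) / (Real.pi * (1 - α)) *
    ∫ φ in Set.Ioo 0 Real.pi,
      mwrightKernel α φ * Real.exp (-(mwrightKernel α φ) * x ^ (1 / (1 - α)))

lemma mwrightKernel_pos {α φ : ℝ} (hα : α ∈ Set.Ioo (0:ℝ) 1)
    (hφ : φ ∈ Set.Ioo 0 Real.pi) : 0 < mwrightKernel α φ := by
  obtain ⟨hα0, hα1⟩ := hα
  obtain ⟨hφ0, hφπ⟩ := hφ
  have hs : 0 < Real.sin φ := Real.sin_pos_of_pos_of_lt_pi hφ0 hφπ
  have h1 : 0 < Real.sin (α * φ) := by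
    apply Real.sin_pos_of_pos_of_lt_pi (by positivity)
    calc α * φ < 1 * φ := by nlinarith
    _ ≤ Real.pi := by linarith
  have h2 : 0 < Real.sin ((1 - α) * φ) := by
    apply Real.sin_pos_of_pos_of_lt_pi (by nlinarith)
    calc (1 - α) * φ < 1 * φ := by nlinarith
    _ ≤ Real.pi := by linarith
  exact mul_pos (Real.rpow_pos_of_pos (div_pos h1 hs) _) (div_pos h2 hs)

lemma aux_bound {s c : ℝ} (hs : 0 ≤ s) (hc : 0 < c) :
    s * Real.exp (-s * c) ≤ 1 / c := by
  have h1 : s * c ≤ Real.exp (s * c) := by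
    have := Real.add_one_le_exp (s * c); linarith
  have h2 : Real.exp (-s * c) = 1 / Real.exp (s * c) := by
    rw [neg_mul, Real.exp_neg]; ring
  have h3 : 0 < Real.exp (s * c) := Real.exp_pos _
  rw [h2, mul_one_div, div_le_div_iff₀ h3 hc]
  nlinarith

/-- Positivity of the M-Wright function: for `α ∈ (0,1)` and `x > 0`, `M_α(x) > 0`. -/
theorem mwright_pos (α : ℝ) (hα : α ∈ Set.Ioo (0:ℝ) 1) (x : ℝ) (hx : 0 < x) :
    0 < mwright α x := by
  obtain ⟨hα0, hα1⟩ := hα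
  set c : ℝ := x ^ (1 / (1 - α)) with hc_def
  have hc : 0 < c := Real.rpow_pos_of_pos hx _
  set f : ℝ → ℝ := fun φ =>
    mwrightKernel α φ * Real.exp (-(mwrightKernel α φ) * c) with hf_def
  have hπ : (0:ℝ) < Real.pi := Real.pi_pos
  -- measurability
  have hmeas : Measurable f := by
    unfold f
    unfold mwrightKernel
    fun_prop
  -- integrability on Ioo
  have hint : MeasureTheory.IntegrableOn f (Set.Ioo 0 Real.pi) := by
    apply MeasureTheory.Integrable.mono' (g := fun _ => (1:ℝ)/c)
      ((MeasureTheory.integrableOn_const_iff (C := (1:ℝ)/c)).mpr (Or.inr measure_Ioo_lt_top))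
      (hmeas.aestronglyMeasurable.restrict)
    rw [MeasureTheory.ae_restrict_iff' measurableSet_Ioo]
    filter_upwards with φ hφ
    have hK := mwrightKernel_pos ⟨hα0, hα1⟩ hφ
    have hb := aux_bound hK.le hc
    have hnn : 0 ≤ f φ := mul_nonneg hK.le (Real.exp_pos _).le
    rw [Real.norm_eq_abs, abs_of_nonneg hnn]
    exact hb
  -- positivity of the integral
  have hIoo : 0 < ∫ φ in Set.Ioo 0 Real.pi, f φ := by
    rw [← MeasureTheory.integral_Ioc_eq_integral_Ioo,
      ← intervalIntegral.integral_of_le hπ.le]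
    apply intervalIntegral.intervalIntegral_pos_of_pos_on
    · rw [intervalIntegrable_iff_integrableOn_Ioo_of_le hπ.le]
      exact hint
    · intro φ hφ
      exact mul_pos (mwrightKernel_pos ⟨hα0, hα1⟩ hφ) (Real.exp_pos _)
    · exact hπ
  have hC : 0 < x ^ (α / (1 - α)) / (Real.pi * (1 - α)) := by
    apply div_pos (Real.rpow_pos_of_pos hx _)
    nlinarith
  exact mul_pos hC hIoo
end

section
/- For every α ∈ (0,1), every l > 0 and every t > 0, one has ∫_0^t l·α·τ^(−(α+1)) · M_α(l·τ^(−α)) dτ ≤ exp(−(1−α)·(α/t)^(α/(1−α)) · l^(1/(1−α))). -/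
open Real MeasureTheory Set

lemma MW.sin_mul_le {c φ : ℝ} (hc0 : 0 ≤ c) (hc1 : c ≤ 1) (hφ0 : 0 ≤ φ) (hφπ : φ ≤ π) :
    c * Real.sin φ ≤ Real.sin (c * φ) := by
  have h := strictConcaveOn_sin_Icc.concaveOn.2 (Set.mem_Icc.2 ⟨le_rfl, Real.pi_pos.le⟩)
      (Set.mem_Icc.2 ⟨hφ0, hφπ⟩) (by linarith : (0:ℝ) ≤ 1 - c) hc0 (by ring)
  simpa using h

lemma MW.pow_le_factorial_mul_exp {y : ℝ} (hy : 0 ≤ y) (n : ℕ) :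
    y ^ n ≤ (Nat.factorial n : ℝ) * Real.exp y := by
  have h2 : y ^ n / Nat.factorial n ≤ ∑ i ∈ Finset.range (n + 1), y ^ i / Nat.factorial i :=
    Finset.single_le_sum (f := fun i => y ^ i / Nat.factorial i) (fun i _ => by positivity)
      (Finset.self_mem_range_succ n)
  have h := h2.trans (Real.sum_le_exp_of_nonneg hy (n + 1))
  have hn : (0:ℝ) < Nat.factorial n := by positivity
  rw [div_le_iff₀ hn] at h
  linarith [h]

lemma MW.rpow_mul_exp_le {p y : ℝ} (hp : 0 ≤ p) (hy : 0 ≤ y) :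
    y ^ p * Real.exp (-y) ≤ (Nat.factorial (Nat.ceil p) : ℝ) + 1 := by
  have hfac : (1:ℝ) ≤ Nat.factorial (Nat.ceil p) := by
    exact_mod_cast Nat.one_le_iff_ne_zero.2 (Nat.factorial_pos _).ne'
  rcases le_or_gt y 1 with h1 | h1
  · have hyp : y ^ p ≤ 1 := Real.rpow_le_one hy h1 hp
    have he : Real.exp (-y) ≤ 1 := Real.exp_le_one_iff.2 (by linarith)
    nlinarith [Real.rpow_nonneg hy p, Real.exp_pos (-y)]
  · have h2 : y ^ p ≤ y ^ (Nat.ceil p : ℝ) :=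
      Real.rpow_le_rpow_of_exponent_le h1.le (Nat.le_ceil p)
    rw [Real.rpow_natCast] at h2
    have h3 := MW.pow_le_factorial_mul_exp hy (Nat.ceil p)
    have he := Real.exp_pos (-y)
    have hee : Real.exp y * Real.exp (-y) = 1 := by rw [← Real.exp_add]; simp
    nlinarith [Real.exp_pos y]

lemma MW.mul_exp_neg_le_one {y : ℝ} (hy : 0 ≤ y) : y * Real.exp (-y) ≤ 1 := by
  have h1 := Real.add_one_le_exp y
  have h2 := Real.exp_pos (-y)
  have hee : Real.exp y * Real.exp (-y) = 1 := by rw [← Real.exp_add]; simp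
  nlinarith

lemma MW.hasDerivAt_g (b v : ℝ) {τ : ℝ} (hτ : 0 < τ) :
    HasDerivAt (fun x : ℝ => Real.exp (-(v * x ^ (-b))))
      (b * v * τ ^ (-(b+1)) * Real.exp (-(v * τ ^ (-b)))) τ := by
  have h1 : HasDerivAt (fun x : ℝ => x ^ (-b)) (-b * τ ^ (-b - 1)) τ :=
    Real.hasDerivAt_rpow_const (Or.inl hτ.ne')
  have h2 := (h1.const_mul (-v)).exp
  simp only [neg_mul] at h2
  convert h2 using 1
  rw [show -(b+1) = -b - 1 by ring]
  ring

lemma MW.F_le {b v : ℝ} (hb : 0 < b) (hv : 0 < v) {τ : ℝ} (hτ : 0 < τ) :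
    b * v * τ ^ (-(b+1)) * Real.exp (-(v * τ ^ (-b)))
      ≤ b * v ^ (-(1/b)) * ((Nat.factorial (Nat.ceil ((b+1)/b)) : ℝ) + 1) := by
  set y : ℝ := v * τ ^ (-b) with hy
  have hτb : 0 < τ ^ (-b) := Real.rpow_pos_of_pos hτ _
  have hy0 : 0 < y := mul_pos hv hτb
  have hp : (0:ℝ) ≤ (b+1)/b := by positivity
  have key : τ ^ (-(b+1)) = y ^ ((b+1)/b) * v ^ (-((b+1)/b)) := by
    have h1 : τ ^ (-(b+1)) = (τ ^ (-b)) ^ ((b+1)/b) := by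
      rw [← Real.rpow_mul hτ.le]
      congr 1
      field_simp
    have h2 : τ ^ (-b) = y / v := by rw [hy]; field_simp
    rw [h1, h2, Real.div_rpow hy0.le hv.le, Real.rpow_neg hv.le, div_eq_mul_inv]
  have hbound := MW.rpow_mul_exp_le hp hy0.le
  have hvp : 0 < v ^ (-((b+1)/b)) := Real.rpow_pos_of_pos hv _
  calc b * v * τ ^ (-(b+1)) * Real.exp (-(v * τ ^ (-b)))
      = b * (v * v ^ (-((b+1)/b))) * (y ^ ((b+1)/b) * Real.exp (-y)) := by
        rw [key]; ring
    _ ≤ b * (v * v ^ (-((b+1)/b))) * ((Nat.factorial (Nat.ceil ((b+1)/b)) : ℝ) + 1) := by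
        apply mul_le_mul_of_nonneg_left hbound
        positivity
    _ = b * v ^ (-(1/b)) * ((Nat.factorial (Nat.ceil ((b+1)/b)) : ℝ) + 1) := by
        congr 2
        nth_rewrite 1 [← Real.rpow_one v]
        rw [← Real.rpow_add hv]
        congr 1
        field_simp
        ring

lemma MW.measurable_F (b v : ℝ) :
    Measurable (fun τ : ℝ => b * v * τ ^ (-(b+1)) * Real.exp (-(v * τ ^ (-b)))) := by
  fun_prop

lemma MW.integrableOn_F {b v t : ℝ} (hb : 0 < b) (hv : 0 < v) :
    IntegrableOn (fun τ : ℝ => b * v * τ ^ (-(b+1)) * Real.exp (-(v * τ ^ (-b))))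
      (Set.Ioo 0 t) := by
  apply Integrable.mono' (g := fun _ : ℝ =>
      b * v ^ (-(1/b)) * ((Nat.factorial (Nat.ceil ((b+1)/b)) : ℝ) + 1))
    (integrable_const _) ((MW.measurable_F b v).aestronglyMeasurable)
  rw [ae_restrict_iff' measurableSet_Ioo]
  filter_upwards with τ hτ
  obtain ⟨hτ1, hτ2⟩ := hτ
  have h1 := MW.F_le hb hv hτ1
  have h0 : 0 ≤ b * v * τ ^ (-(b+1)) * Real.exp (-(v * τ ^ (-b))) := by positivity
  rw [Real.norm_eq_abs, abs_of_nonneg h0]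
  exact h1

lemma MW.integral_F_le {b v t : ℝ} (hb : 0 < b) (hv : 0 < v) (ht : 0 < t) :
    ∫ τ in Set.Ioo 0 t, b * v * τ ^ (-(b+1)) * Real.exp (-(v * τ ^ (-b)))
      ≤ Real.exp (-(v * t ^ (-b))) := by
  set F : ℝ → ℝ := fun τ => b * v * τ ^ (-(b+1)) * Real.exp (-(v * τ ^ (-b))) with hF
  have hint : IntegrableOn F (Set.Ioc 0 t) := by
    rw [integrableOn_Ioc_iff_integrableOn_Ioo]
    exact MW.integrableOn_F hb hv
  set s : ℕ → Set ℝ := fun n => Set.Ioc (t / (n + 1)) t with hs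
  have hsm : ∀ n, MeasurableSet (s n) := fun n => measurableSet_Ioc
  have hmono : Monotone s := by
    intro n m hnm
    apply Set.Ioc_subset_Ioc_left
    apply div_le_div_of_nonneg_left ht.le (by positivity)
    have : (n:ℝ) ≤ m := Nat.cast_le.2 hnm
    linarith
  have hU : (⋃ n, s n) = Set.Ioc 0 t := by
    ext x
    simp only [Set.mem_iUnion, Set.mem_Ioc, hs]
    constructor
    · rintro ⟨n, h1, h2⟩
      exact ⟨lt_trans (by positivity) h1, h2⟩
    · rintro ⟨h1, h2⟩
      obtain ⟨n, hn⟩ := exists_nat_gt (t / x)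
      refine ⟨n, ?_, h2⟩
      rw [div_lt_iff₀ (by positivity)]
      rw [div_lt_iff₀ h1] at hn
      nlinarith
  have htend := tendsto_setIntegral_of_monotone hsm hmono (hU ▸ hint)
  rw [hU] at htend
  have hbound : ∀ n : ℕ, ∫ x in s n, F x ≤ Real.exp (-(v * t ^ (-b))) := by
    intro n
    have hε : 0 < t / (n + 1) := by positivity
    have hεt : t / (n + 1) ≤ t := by
      apply div_le_self ht.le
      have := Nat.cast_nonneg (α := ℝ) n
      linarith
    have hFTC := intervalIntegral.integral_eq_sub_of_hasDerivAt
      (f := fun x : ℝ => Real.exp (-(v * x ^ (-b)))) (f' := F)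
      (a := t / (n+1)) (b := t)
      (fun x hx => by
        apply MW.hasDerivAt_g b v
        rcases Set.mem_uIcc.1 hx with h | h
        · linarith [h.1]
        · linarith [h.1, hε, hεt])
      (by
        apply IntegrableOn.intervalIntegrable
        apply hint.mono_set
        rw [Set.uIcc_of_le hεt]
        intro x hx
        exact ⟨lt_of_lt_of_le hε hx.1, hx.2⟩)
    rw [intervalIntegral.integral_of_le hεt] at hFTC
    rw [hs]
    simp only []
    rw [hFTC]
    have := Real.exp_pos (-(v * (t / (n+1)) ^ (-b)))
    linarith
  have hle := le_of_tendsto htend (Filter.Eventually.of_forall hbound)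
  calc ∫ τ in Set.Ioo 0 t, F τ = ∫ τ in Set.Ioc 0 t, F τ :=
        (MeasureTheory.integral_Ioc_eq_integral_Ioo).symm
    _ ≤ _ := hle

lemma MW.kernel_ge {α φ : ℝ} (hα0 : 0 < α) (hα1 : α < 1) (hφ : φ ∈ Set.Ioo 0 π) :
    α ^ (α / (1 - α)) * (1 - α) ≤ mwrightKernel α φ := by
  obtain ⟨hφ0, hφπ⟩ := hφ
  have hs : 0 < Real.sin φ := Real.sin_pos_of_pos_of_lt_pi hφ0 hφπ
  have h1 : α ≤ Real.sin (α * φ) / Real.sin φ :=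
    (le_div_iff₀ hs).2 (MW.sin_mul_le hα0.le hα1.le hφ0.le hφπ.le)
  have h2 : 1 - α ≤ Real.sin ((1 - α) * φ) / Real.sin φ :=
    (le_div_iff₀ hs).2 (MW.sin_mul_le (by linarith) (by linarith) hφ0.le hφπ.le)
  have h1' : α ^ (α / (1 - α)) ≤ (Real.sin (α * φ) / Real.sin φ) ^ (α / (1 - α)) :=
    Real.rpow_le_rpow hα0.le h1 (div_nonneg hα0.le (by linarith))
  unfold mwrightKernel
  exact mul_le_mul h1' h2 (by linarith) ((Real.rpow_nonneg hα0.le _).trans h1')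

lemma MW.measurable_kernel (α : ℝ) : Measurable (mwrightKernel α) := by
  unfold mwrightKernel
  fun_prop


/-- Lemma 5.3(iii): the `L¹(0,t)`-bound
`∫_0^t lα τ^{−(α+1)} M_α(l τ^{−α}) dτ ≤ exp(−(1−α)(α/t)^{α/(1−α)} l^{1/(1−α)})`. -/
theorem mwright_kernel_L1_bound
    (α l t : ℝ) (hα : α ∈ Set.Ioo (0:ℝ) 1) (hl : 0 < l) (ht : 0 < t) :
    ∫ τ in Set.Ioo 0 t, l * α * τ ^ (-(α + 1)) * mwright α (l * τ ^ (-α))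
      ≤ Real.exp (-(1 - α) * (α / t) ^ (α / (1 - α)) * l ^ (1 / (1 - α))) := by
  obtain ⟨hα0, hα1⟩ := hα
  have h1α : 0 < 1 - α := by linarith
  set β := α / (1 - α) with hβ
  have hβ0 : 0 < β := by positivity
  set L := l ^ (1 / (1 - α)) with hL
  have hL0 : 0 < L := Real.rpow_pos_of_pos hl _
  set u := mwrightKernel α with hu
  set m := α ^ β * (1 - α) with hm
  have hm0 : 0 < m := by positivity
  have htβ : 0 < t ^ (-β) := Real.rpow_pos_of_pos ht _
  have hker : ∀ φ ∈ Set.Ioo 0 π, m ≤ u φ := fun φ hφ => MW.kernel_ge hα0 hα1 hφ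
  have hupos : ∀ φ ∈ Set.Ioo 0 π, 0 < u φ := fun φ hφ => lt_of_lt_of_le hm0 (hker φ hφ)
  have hRHS : Real.exp (-(1 - α) * (α / t) ^ β * L) = Real.exp (-(m * L * t ^ (-β))) := by
    congr 1
    rw [Real.div_rpow hα0.le ht.le, Real.rpow_neg ht.le, hm]
    ring
  rw [hRHS]
  set K : ℝ → ℝ → ℝ :=
    fun τ φ => β * (u φ * L) * τ ^ (-(β+1)) * Real.exp (-(u φ * L * τ ^ (-β))) with hK
  have hKnonneg : ∀ τ, 0 < τ → ∀ φ ∈ Set.Ioo 0 π, 0 ≤ K τ φ := by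
    intro τ hτ φ hφ
    have h1 := hupos φ hφ
    rw [hK]
    have : 0 < τ ^ (-(β+1)) := Real.rpow_pos_of_pos hτ _
    positivity
  have hKmeas : Measurable (Function.uncurry K) := by
    rw [hK]
    unfold Function.uncurry
    have := MW.measurable_kernel α
    rw [hu]
    fun_prop
  -- Step 1: rewrite the integrand
  have hfrw : Set.EqOn (fun τ => l * α * τ ^ (-(α + 1)) * mwright α (l * τ ^ (-α)))
      (fun τ => (1 / π) * ∫ φ in Set.Ioo 0 π, K τ φ) (Set.Ioo 0 t) := by
    intro τ hτ
    obtain ⟨hτ0, hτt⟩ := hτ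
    have hτα : 0 < τ ^ (-α) := Real.rpow_pos_of_pos hτ0 _
    have hexp : (l * τ ^ (-α)) ^ (1 / (1 - α)) = L * τ ^ (-β) := by
      rw [Real.mul_rpow hl.le (Real.rpow_nonneg hτ0.le _), ← Real.rpow_mul hτ0.le]
      congr 1
      rw [hβ]; ring
    have hxβ : (l * τ ^ (-α)) ^ β = l ^ β * τ ^ (-α * β) := by
      rw [Real.mul_rpow hl.le hτα.le, ← Real.rpow_mul hτ0.le]
    simp only
    unfold mwright
    rw [← hβ, ← hu, hexp, hxβ]
    have hKφ : ∀ φ, K τ φ =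
        (β * L * τ ^ (-(β+1))) * (u φ * Real.exp (-(u φ) * (L * τ ^ (-β)))) := by
      intro φ
      rw [hK, show -(u φ) * (L * τ ^ (-β)) = -(u φ * L * τ ^ (-β)) by ring]
      ring
    simp_rw [hKφ]
    rw [MeasureTheory.integral_const_mul]
    have hll : l * l ^ β = L := by
      rw [hL, hβ]
      nth_rewrite 1 [← Real.rpow_one l]
      rw [← Real.rpow_add hl]
      congr 1
      field_simp
      ring
    have hττ : τ ^ (-(α+1)) * τ ^ (-α * β) = τ ^ (-(β+1)) := by
      rw [← Real.rpow_add hτ0]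
      congr 1
      rw [hβ]
      field_simp
      ring
    have hβα : β * (1 - α) = α := by rw [hβ]; field_simp
    have hπ : (π : ℝ) ≠ 0 := Real.pi_ne_zero
    set I : ℝ := ∫ φ in Set.Ioo 0 π, u φ * Real.exp (-(u φ) * (L * τ ^ (-β))) with hI
    rw [show -(α + 1) = -(α+1) from rfl]
    have hc0 : α / (π * (1 - α)) = 1 / π * β := by
      rw [hβ]
      field_simp
    have hconst : l * α * τ ^ (-(α + 1)) * (l ^ β * τ ^ (-α * β) / (π * (1 - α)))
        = 1 / π * (β * L * τ ^ (-(β+1))) := by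
      calc l * α * τ ^ (-(α + 1)) * (l ^ β * τ ^ (-α * β) / (π * (1 - α)))
          = α / (π * (1 - α)) * ((l * l ^ β) * (τ ^ (-(α + 1)) * τ ^ (-α * β))) := by ring
        _ = 1 / π * β * (L * τ ^ (-(β+1))) := by rw [hc0, hll, hττ]
        _ = 1 / π * (β * L * τ ^ (-(β+1))) := by ring
    linear_combination I * hconst
  rw [MeasureTheory.setIntegral_congr_fun measurableSet_Ioo hfrw]
  -- a.e. nonnegativity and measurability of the inner-integral function
  have hg_nonneg : 0 ≤ᵐ[volume.restrict (Set.Ioo 0 t)]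
      fun τ => (1 / π) * ∫ φ in Set.Ioo 0 π, K τ φ := by
    filter_upwards [ae_restrict_mem measurableSet_Ioo] with τ hτ
    have : 0 ≤ ∫ φ in Set.Ioo 0 π, K τ φ :=
      MeasureTheory.setIntegral_nonneg measurableSet_Ioo (hKnonneg τ hτ.1)
    positivity
  have hg_meas : AEStronglyMeasurable (fun τ => (1 / π) * ∫ φ in Set.Ioo 0 π, K τ φ)
      (volume.restrict (Set.Ioo 0 t)) := by
    apply AEStronglyMeasurable.const_mul
    have h := (hKmeas.aestronglyMeasurable :
        AEStronglyMeasurable (Function.uncurry K)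
          ((volume.restrict (Set.Ioo 0 t)).prod (volume.restrict (Set.Ioo 0 π))))
    exact h.integral_prod_right'
  rw [MeasureTheory.integral_eq_lintegral_of_nonneg_ae hg_nonneg hg_meas]
  apply ENNReal.toReal_le_of_le_ofReal (Real.exp_nonneg _)
  -- integrability in φ of K τ ·
  have hKint : ∀ τ, 0 < τ → Integrable (fun φ => K τ φ) (volume.restrict (Set.Ioo 0 π)) := by
    intro τ hτ0
    have hX : 0 < L * τ ^ (-β) := by
      have := Real.rpow_pos_of_pos hτ0 (-β); positivity
    have hτβ1 : 0 < τ ^ (-(β+1)) := Real.rpow_pos_of_pos hτ0 _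
    apply Integrable.mono' (g := fun _ : ℝ => β * L * τ ^ (-(β+1)) * (1 / (L * τ ^ (-β))))
      (integrable_const _)
    · have : Measurable fun φ => K τ φ := by
        rw [hK, hu]
        have := MW.measurable_kernel α
        fun_prop
      exact this.aestronglyMeasurable
    · filter_upwards [ae_restrict_mem measurableSet_Ioo] with φ hφ
      have hup := hupos φ hφ
      have hKn := hKnonneg τ hτ0 φ hφ
      rw [Real.norm_eq_abs, abs_of_nonneg hKn, hK]
      simp only
      have hy : 0 ≤ u φ * (L * τ ^ (-β)) := by positivity
      have hb1 := MW.mul_exp_neg_le_one hy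
      have hτβ : 0 < τ ^ (-β) := Real.rpow_pos_of_pos hτ0 _
      calc β * (u φ * L) * τ ^ (-(β+1)) * Real.exp (-(u φ * L * τ ^ (-β)))
          = β * L * τ ^ (-(β+1)) * (1 / (L * τ ^ (-β)))
            * (u φ * (L * τ ^ (-β)) * Real.exp (-(u φ * (L * τ ^ (-β))))) := by
            rw [show -(u φ * (L * τ ^ (-β))) = -(u φ * L * τ ^ (-β)) by ring]
            field_simp
        _ ≤ β * L * τ ^ (-(β+1)) * (1 / (L * τ ^ (-β))) * 1 := by
            apply mul_le_mul_of_nonneg_left hb1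
            positivity
        _ = β * L * τ ^ (-(β+1)) * (1 / (L * τ ^ (-β))) := mul_one _
  have hstep : ∀ᵐ τ ∂(volume.restrict (Set.Ioo 0 t)),
      ENNReal.ofReal ((1/π) * ∫ φ in Set.Ioo 0 π, K τ φ)
        = ENNReal.ofReal (1/π) * ∫⁻ φ in Set.Ioo 0 π, ENNReal.ofReal (K τ φ) := by
    filter_upwards [ae_restrict_mem measurableSet_Ioo] with τ hτ
    rw [ENNReal.ofReal_mul (by positivity)]
    congr 1
    apply MeasureTheory.ofReal_integral_eq_lintegral_ofReal (hKint τ hτ.1)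
    filter_upwards [ae_restrict_mem measurableSet_Ioo] with φ hφ
    exact hKnonneg τ hτ.1 φ hφ
  rw [lintegral_congr_ae hstep]
  rw [lintegral_const_mul' _ _ ENNReal.ofReal_ne_top]
  have hswap : (∫⁻ τ in Set.Ioo 0 t, ∫⁻ φ in Set.Ioo 0 π, ENNReal.ofReal (K τ φ))
      = ∫⁻ φ in Set.Ioo 0 π, ∫⁻ τ in Set.Ioo 0 t, ENNReal.ofReal (K τ φ) := by
    apply MeasureTheory.lintegral_lintegral_swap
    exact (hKmeas.ennreal_ofReal).aemeasurable
  rw [hswap]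
  have hinner : ∀ φ ∈ Set.Ioo 0 π, (∫⁻ τ in Set.Ioo 0 t, ENNReal.ofReal (K τ φ))
      ≤ ENNReal.ofReal (Real.exp (-(m * L * t ^ (-β)))) := by
    intro φ hφ
    have hv : 0 < u φ * L := mul_pos (hupos φ hφ) hL0
    have h1 : ENNReal.ofReal (∫ τ in Set.Ioo 0 t, K τ φ)
        = ∫⁻ τ in Set.Ioo 0 t, ENNReal.ofReal (K τ φ) := by
      apply MeasureTheory.ofReal_integral_eq_lintegral_ofReal
      · exact MW.integrableOn_F hβ0 hv
      · filter_upwards [ae_restrict_mem measurableSet_Ioo] with τ hτ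
        exact hKnonneg τ hτ.1 φ hφ
    rw [← h1]
    calc ENNReal.ofReal (∫ τ in Set.Ioo 0 t, K τ φ)
        ≤ ENNReal.ofReal (Real.exp (-(u φ * L * t ^ (-β)))) :=
          ENNReal.ofReal_le_ofReal (MW.integral_F_le hβ0 hv ht)
      _ ≤ ENNReal.ofReal (Real.exp (-(m * L * t ^ (-β)))) := by
          apply ENNReal.ofReal_le_ofReal
          apply Real.exp_le_exp.2
          have h2 : m * (L * t ^ (-β)) ≤ u φ * (L * t ^ (-β)) :=
            mul_le_mul_of_nonneg_right (hker φ hφ) (by positivity)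
          nlinarith [h2]
  calc ENNReal.ofReal (1/π) * ∫⁻ φ in Set.Ioo 0 π, ∫⁻ τ in Set.Ioo 0 t, ENNReal.ofReal (K τ φ)
      ≤ ENNReal.ofReal (1/π)
        * ∫⁻ _ in Set.Ioo 0 π, ENNReal.ofReal (Real.exp (-(m * L * t ^ (-β)))) := by
        apply mul_le_mul_right
        apply MeasureTheory.lintegral_mono_ae
        filter_upwards [ae_restrict_mem measurableSet_Ioo] with φ hφ
        exact hinner φ hφ
    _ = ENNReal.ofReal (1/π) * (ENNReal.ofReal (Real.exp (-(m * L * t ^ (-β)))) * ENNReal.ofReal π) := by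
        rw [MeasureTheory.setLIntegral_const, Real.volume_Ioo, sub_zero]
    _ = ENNReal.ofReal (Real.exp (-(m * L * t ^ (-β)))) := by
        rw [← ENNReal.ofReal_mul (Real.exp_nonneg _), ← ENNReal.ofReal_mul (by positivity)]
        congr 1
        field_simp
end

section
/- Let α ∈ (0,1), let k be a natural number with k ≥ 1, let m be a natural number, let c = ⌊1/(1−α)⌋, and set B₁ = ((2+k)^c − k^c)^(1/(c(1−α))). Then (2m+k)^(1/(1−α)) ≥ k^(1/(1−α)) + m·B₁. -/
/-!
Write `1/(1-α) = c·p` with `c = ⌊1/(1-α)⌋ ≥ 1` and `p = 1/(c(1-α)) ≥ 1`. Expanding binomially,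
`(2m+k)^c ≥ k^c + m((2+k)^c - k^c)`, since every term of `m(2+k)^c` other than the constant one
is dominated by the corresponding term of `(2m+k)^c`. Raising to the power `p` and using the
superadditivity of `x ↦ x^p` on `[0, ∞)` splits off `m` copies of `B₁ = ((2+k)^c - k^c)^p`.
-/

lemma Nat.mul_add_pow_add_pow_le (a b m c : ℕ) :
    m * (a + b) ^ c + b ^ c ≤ (a * m + b) ^ c + m * b ^ c := by
  have hterm (i : ℕ) :
      m * (a ^ (i + 1) * b ^ (c - (i + 1)) * c.choose (i + 1))
        ≤ (a * m) ^ (i + 1) * b ^ (c - (i + 1)) * c.choose (i + 1) := by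
    calc m * (a ^ (i + 1) * b ^ (c - (i + 1)) * c.choose (i + 1))
        ≤ m ^ (i + 1) * (a ^ (i + 1) * b ^ (c - (i + 1)) * c.choose (i + 1)) :=
          Nat.mul_le_mul_right _ (Nat.le_self_pow i.succ_ne_zero m)
      _ = (a * m) ^ (i + 1) * b ^ (c - (i + 1)) * c.choose (i + 1) := by ring
  have hsum := Finset.sum_le_sum fun i (_ : i ∈ Finset.range c) => hterm i
  rw [add_pow, add_pow, Finset.mul_sum, Finset.sum_range_succ', Finset.sum_range_succ']
  simp only [pow_zero, one_mul, Nat.sub_zero, Nat.choose_zero_right, Nat.cast_id, mul_one]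
  omega

lemma Real.rpow_add_natCast_mul_rpow_le {x y p : ℝ} (hx : 0 ≤ x) (hy : 0 ≤ y) (hp : 1 ≤ p)
    (m : ℕ) : x ^ p + m * y ^ p ≤ (x + m * y) ^ p := by
  induction m with
  | zero => simp
  | succ m ih =>
    calc x ^ p + (m + 1 : ℕ) * y ^ p = (x ^ p + m * y ^ p) + y ^ p := by push_cast; ring
      _ ≤ (x + m * y) ^ p + y ^ p := by gcongr
      _ ≤ (x + m * y + y) ^ p := Real.add_rpow_le_rpow_add (by positivity) hy hp
      _ = (x + (m + 1 : ℕ) * y) ^ p := by push_cast; ring_nf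

theorem pow_superadditive_bound_general
    (α : ℝ) (hα : α ∈ Set.Ioo (0:ℝ) 1) (k m : ℕ)
    (c : ℕ) (hc : c = ⌊1 / (1 - α)⌋₊)
    (B₁ : ℝ) (hB₁ : B₁ = ((2 + (k:ℝ)) ^ c - (k:ℝ) ^ c) ^ (1 / ((c:ℝ) * (1 - α)))) :
    (2 * (m:ℝ) + k) ^ (1 / (1 - α)) ≥ (k:ℝ) ^ (1 / (1 - α)) + m * B₁ := by
  obtain ⟨hα0, hα1⟩ := hα
  have h1α : 0 < 1 - α := by linarith
  have hβ : 1 ≤ 1 / (1 - α) := one_le_one_div h1α (by linarith)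
  have hc_pos : (0 : ℝ) < c := by rw [hc]; exact_mod_cast Nat.floor_pos.2 hβ
  have hc_le : (c : ℝ) * (1 - α) ≤ 1 := by
    rw [← le_div_iff₀ h1α, hc]; exact Nat.floor_le (by positivity)
  set p := 1 / ((c : ℝ) * (1 - α))
  have hp : 1 ≤ p := one_le_one_div (by positivity) hc_le
  have hβ_eq : 1 / (1 - α) = c * p := by simp only [p]; field_simp
  have hdiff : (0 : ℝ) ≤ (2 + k) ^ c - k ^ c := sub_nonneg.2 (by gcongr; linarith)
  have hbinom : (k : ℝ) ^ c + m * ((2 + k) ^ c - k ^ c) ≤ (2 * m + k) ^ c := by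
    have hR : (m : ℝ) * (2 + k) ^ c + k ^ c ≤ (2 * m + k) ^ c + m * k ^ c := by
      exact_mod_cast Nat.mul_add_pow_add_pow_le 2 k m c
    linarith
  simp only [hβ_eq, Real.rpow_mul (Nat.cast_nonneg _),
    Real.rpow_mul (by positivity : (0 : ℝ) ≤ 2 * m + k), Real.rpow_natCast, hB₁]
  calc ((k : ℝ) ^ c) ^ p + m * ((2 + k) ^ c - k ^ c) ^ p
      ≤ ((k : ℝ) ^ c + m * ((2 + k) ^ c - k ^ c)) ^ p :=
        Real.rpow_add_natCast_mul_rpow_le (by positivity) hdiff hp m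
    _ ≤ ((2 * m + k : ℝ) ^ c) ^ p := by gcongr

/-- The combinatorial inequality (lam_4_2) in the proof of Lemma 6.3(ii):
with `c = ⌊1/(1−α)⌋` and `B₁ = ((2+k)^c − k^c)^(1/(c(1−α)))`,
`(2m+k)^(1/(1−α)) ≥ k^(1/(1−α)) + m·B₁`. -/
theorem pow_superadditive_bound
    (α : ℝ) (hα : α ∈ Set.Ioo (0:ℝ) 1) (k m : ℕ) (hk : 1 ≤ k)
    (c : ℕ) (hc : c = ⌊1 / (1 - α)⌋₊)
    (B₁ : ℝ) (hB₁ : B₁ = ((2 + (k:ℝ)) ^ c - (k:ℝ) ^ c) ^ (1 / ((c:ℝ) * (1 - α)))) :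
    (2 * (m:ℝ) + k) ^ (1 / (1 - α)) ≥ (k:ℝ) ^ (1 / (1 - α)) + m * B₁ :=
  pow_superadditive_bound_general α hα k m c hc B₁ hB₁
end

section
/- Let α ∈ (0,1), let k be a natural number with k ≥ 1, let A > 0, let c = ⌊1/(1−α)⌋, and set B₁ = ((2+k)^c − k^c)^(1/(c(1−α))). Then 2^k · Σ_{m=0}^∞ C(m+k−1, m) · exp(−A·(2m+k)^(1/(1−α))) ≤ (2/(1 − exp(−A·B₁)))^k · exp(−A·k^(1/(1−α))), where C(·,·) denotes the binomial coefficient. -/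
lemma nat_key_ineq (m k c : ℕ) :
    k ^ c + m * (2 + k) ^ c ≤ (2 * m + k) ^ c + m * k ^ c := by
  have h1 : (2 * m + k) ^ c =
      k ^ c + ∑ j ∈ Finset.range c, (2 * m) ^ (j + 1) * k ^ (c - (j + 1)) * c.choose (j + 1) := by
    rw [add_pow, Finset.sum_range_succ']
    simp [add_comm]
  have h2 : (2 + k) ^ c =
      k ^ c + ∑ j ∈ Finset.range c, 2 ^ (j + 1) * k ^ (c - (j + 1)) * c.choose (j + 1) := by
    rw [add_pow, Finset.sum_range_succ']
    simp [add_comm]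
  rw [h1, h2, mul_add, Finset.mul_sum]
  have hterm : ∀ j ∈ Finset.range c,
      m * (2 ^ (j + 1) * k ^ (c - (j + 1)) * c.choose (j + 1)) ≤
        (2 * m) ^ (j + 1) * k ^ (c - (j + 1)) * c.choose (j + 1) := by
    intro j _
    have h2m : m * 2 ^ (j + 1) ≤ (2 * m) ^ (j + 1) := by
      rw [mul_pow]
      calc m * 2 ^ (j+1) ≤ m ^ (j+1) * 2 ^ (j+1) :=
            Nat.mul_le_mul_right _ (Nat.le_self_pow (by omega) m)
        _ = 2 ^ (j+1) * m ^ (j+1) := by ring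
    calc m * (2 ^ (j + 1) * k ^ (c - (j + 1)) * c.choose (j + 1))
        = (m * 2 ^ (j + 1)) * k ^ (c - (j + 1)) * c.choose (j + 1) := by ring
      _ ≤ (2 * m) ^ (j + 1) * k ^ (c - (j + 1)) * c.choose (j + 1) :=
          Nat.mul_le_mul_right _ (Nat.mul_le_mul_right _ h2m)
  have hs := Finset.sum_le_sum hterm
  omega

lemma rpow_superadd {a b q : ℝ} (ha : 0 ≤ a) (hb : 0 ≤ b) (hq : 1 ≤ q) :
    a ^ q + b ^ q ≤ (a + b) ^ q := by
  have h := NNReal.add_rpow_le_rpow_add (⟨a, ha⟩ : NNReal) (⟨b, hb⟩ : NNReal) hq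
  have := NNReal.coe_le_coe.mpr h
  push_cast at this
  convert this using 2
  all_goals rfl

/-- The series estimate of Lemma 6.3(ii):
`2^k Σ_{m≥0} C(m+k−1,m) exp(−A(2m+k)^(1/(1−α)))
  ≤ (2/(1−exp(−A·B₁)))^k exp(−A k^(1/(1−α)))`,
with `c = ⌊1/(1−α)⌋` and `B₁ = ((2+k)^c − k^c)^(1/(c(1−α)))`. -/
theorem cosech_pow_series_bound
    (α : ℝ) (hα : α ∈ Set.Ioo (0:ℝ) 1) (k : ℕ) (hk : 1 ≤ k) (A : ℝ) (hA : 0 < A)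
    (c : ℕ) (hc : c = ⌊1 / (1 - α)⌋₊)
    (B₁ : ℝ) (hB₁ : B₁ = ((2 + (k:ℝ)) ^ c - (k:ℝ) ^ c) ^ (1 / ((c:ℝ) * (1 - α)))) :
    (2:ℝ) ^ k * ∑' m : ℕ, ((m + k - 1).choose m : ℝ) *
        Real.exp (-A * (2 * (m:ℝ) + k) ^ (1 / (1 - α)))
      ≤ (2 / (1 - Real.exp (-A * B₁))) ^ k *
          Real.exp (-A * (k:ℝ) ^ (1 / (1 - α))) := by
  obtain ⟨hα0, hα1⟩ := hα
  set p : ℝ := 1 / (1 - α) with hp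
  have h1α : (0:ℝ) < 1 - α := by linarith
  have hp1 : 1 < p := by
    rw [hp]
    rw [lt_div_iff₀ h1α]
    linarith
  have hc1 : 1 ≤ c := by
    rw [hc]
    exact Nat.le_floor (by exact_mod_cast hp1.le)
  have hcp : (c:ℝ) ≤ p := by
    rw [hc]
    exact Nat.floor_le (by positivity)
  have hc0 : (0:ℝ) < c := by exact_mod_cast hc1
  set q : ℝ := p / c with hqdef
  have hq1 : 1 ≤ q := (one_le_div hc0).mpr hcp
  have hq0 : 0 ≤ q := by linarith
  have hpcq : p = c * q := by rw [hqdef]; field_simp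
  set D : ℝ := (2 + (k:ℝ)) ^ c - (k:ℝ) ^ c with hD
  have hDpos : 0 < D := by
    have : (k:ℝ) ^ c < (2 + (k:ℝ)) ^ c := by
      apply pow_lt_pow_left₀ (by linarith) (by positivity)
      omega
    simpa [hD] using sub_pos.mpr this
  have hB₁q : B₁ = D ^ q := by
    rw [hB₁, hD, hqdef, hp]
    congr 1
    field_simp
  have hB₁pos : 0 < B₁ := by
    rw [hB₁q]; positivity
  set x : ℝ := Real.exp (-A * B₁) with hx
  have hx0 : 0 < x := Real.exp_pos _
  have hx1 : x < 1 := by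
    rw [hx, Real.exp_lt_one_iff]
    nlinarith
  -- key pointwise inequality
  have key : ∀ m : ℕ, (k:ℝ) ^ p + m * B₁ ≤ (2 * (m:ℝ) + k) ^ p := by
    intro m
    have hnat := nat_key_ineq m k c
    have hreal : (k:ℝ) ^ c + m * D ≤ ((2 * m + k : ℕ) : ℝ) ^ c := by
      have := (Nat.cast_le (α := ℝ)).mpr hnat
      push_cast at this
      push_cast
      nlinarith [this]
    have hbase : (0:ℝ) ≤ 2 * (m:ℝ) + k := by positivity
    have hcast : ((2 * m + k : ℕ) : ℝ) = 2 * (m:ℝ) + k := by push_cast; ring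
    rw [hcast] at hreal
    have step1 : (2 * (m:ℝ) + k) ^ p = ((2 * (m:ℝ) + k) ^ c) ^ q := by
      rw [hpcq, ← Real.rpow_natCast (2 * (m:ℝ) + k) c, ← Real.rpow_mul hbase]
    have step2 : ((k:ℝ) ^ c + m * D) ^ q ≤ ((2 * (m:ℝ) + k) ^ c) ^ q :=
      Real.rpow_le_rpow (by positivity) hreal hq0
    have step3 : ((k:ℝ) ^ c) ^ q + ((m:ℝ) * D) ^ q ≤ ((k:ℝ) ^ c + m * D) ^ q :=
      rpow_superadd (by positivity) (by positivity) hq1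
    have step4 : (k:ℝ) ^ p = ((k:ℝ) ^ c) ^ q := by
      rw [hpcq, ← Real.rpow_natCast (k:ℝ) c, ← Real.rpow_mul (by positivity)]
    have step5 : (m:ℝ) * B₁ ≤ ((m:ℝ) * D) ^ q := by
      rw [Real.mul_rpow (by positivity) hDpos.le, hB₁q]
      rcases Nat.eq_zero_or_pos m with rfl | hm
      · simp [Real.zero_rpow (by linarith : q ≠ 0)]
      · have hm1 : (1:ℝ) ≤ m := by exact_mod_cast hm
        have : (m:ℝ) = (m:ℝ) ^ (1:ℝ) := (Real.rpow_one _).symm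
        have hmq : (m:ℝ) ≤ (m:ℝ) ^ q := by
          nth_rewrite 1 [this]
          exact Real.rpow_le_rpow_of_exponent_le hm1 hq1
        exact mul_le_mul_of_nonneg_right hmq (by positivity)
    calc (k:ℝ) ^ p + m * B₁ ≤ ((k:ℝ) ^ c) ^ q + ((m:ℝ) * D) ^ q := by
          rw [step4]; linarith
      _ ≤ ((k:ℝ) ^ c + m * D) ^ q := step3
      _ ≤ ((2 * (m:ℝ) + k) ^ c) ^ q := step2
      _ = (2 * (m:ℝ) + k) ^ p := step1.symm
  -- choose rewrite
  set j : ℕ := k - 1 with hj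
  have hkj : k = j + 1 := by omega
  have hchoose : ∀ m : ℕ, (m + k - 1).choose m = (m + j).choose j := by
    intro m
    have h1 : m + k - 1 = m + j := by omega
    rw [h1]
    rw [← Nat.choose_symm (Nat.le_add_left j m)]
    congr 1
    omega
  -- termwise bound
  have hterm : ∀ m : ℕ, ((m + k - 1).choose m : ℝ) *
      Real.exp (-A * (2 * (m:ℝ) + k) ^ p) ≤
      Real.exp (-A * (k:ℝ) ^ p) * (((m + j).choose j : ℝ) * x ^ m) := by
    intro m
    rw [hchoose m]
    have hexp : Real.exp (-A * (2 * (m:ℝ) + k) ^ p) ≤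
        Real.exp (-A * (k:ℝ) ^ p) * x ^ m := by
      rw [hx, ← Real.exp_nat_mul, ← Real.exp_add]
      apply Real.exp_le_exp.mpr
      have := key m
      nlinarith [key m]
    calc ((m + j).choose j : ℝ) * Real.exp (-A * (2 * (m:ℝ) + k) ^ p)
        ≤ ((m + j).choose j : ℝ) * (Real.exp (-A * (k:ℝ) ^ p) * x ^ m) :=
          mul_le_mul_of_nonneg_left hexp (by positivity)
      _ = Real.exp (-A * (k:ℝ) ^ p) * (((m + j).choose j : ℝ) * x ^ m) := by ring
  have hxnorm : ‖x‖ < 1 := by rw [Real.norm_eq_abs, abs_of_pos hx0]; exact hx1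
  have hsum_geo : Summable (fun m : ℕ ↦ ((m + j).choose j : ℝ) * x ^ m) :=
    summable_choose_mul_geometric_of_norm_lt_one j hxnorm
  have hsumr : Summable (fun m : ℕ ↦
      Real.exp (-A * (k:ℝ) ^ p) * (((m + j).choose j : ℝ) * x ^ m)) :=
    hsum_geo.mul_left _
  have hsuml : Summable (fun m : ℕ ↦ ((m + k - 1).choose m : ℝ) *
      Real.exp (-A * (2 * (m:ℝ) + k) ^ p)) := by
    apply Summable.of_nonneg_of_le (fun m => by positivity) hterm hsumr
  have htsum : (∑' m : ℕ, ((m + k - 1).choose m : ℝ) *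
      Real.exp (-A * (2 * (m:ℝ) + k) ^ p)) ≤
      Real.exp (-A * (k:ℝ) ^ p) * (1 / (1 - x) ^ (j + 1)) := by
    calc (∑' m : ℕ, ((m + k - 1).choose m : ℝ) * Real.exp (-A * (2 * (m:ℝ) + k) ^ p))
        ≤ ∑' m : ℕ, Real.exp (-A * (k:ℝ) ^ p) * (((m + j).choose j : ℝ) * x ^ m) :=
          Summable.tsum_le_tsum hterm hsuml hsumr
      _ = Real.exp (-A * (k:ℝ) ^ p) * ∑' m : ℕ, (((m + j).choose j : ℝ) * x ^ m) :=
          tsum_mul_left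
      _ = Real.exp (-A * (k:ℝ) ^ p) * (1 / (1 - x) ^ (j + 1)) := by
          rw [tsum_choose_mul_geometric_of_norm_lt_one j hxnorm]
  have h1x : 0 < 1 - x := by linarith
  calc (2:ℝ) ^ k * ∑' m : ℕ, ((m + k - 1).choose m : ℝ) *
        Real.exp (-A * (2 * (m:ℝ) + k) ^ p)
      ≤ (2:ℝ) ^ k * (Real.exp (-A * (k:ℝ) ^ p) * (1 / (1 - x) ^ (j + 1))) := by
        apply mul_le_mul_of_nonneg_left htsum (by positivity)
    _ = (2 / (1 - x)) ^ k * Real.exp (-A * (k:ℝ) ^ p) := by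
        rw [div_pow, hkj]
        field_simp
end

section
/- Let α ∈ (0,1), let t > 0, let 0 < l₁ < l₂, let k be a natural number with k ≥ 1, let c = ⌊1/(1−α)⌋, and set Λ_t = (1−α)·(α/t)^(α/(1−α)), B₂ = Λ_t · l₁^(1/(1−α)), C₂ = ((2·l₂/l₁ + k)^c − k^c)^(1/(c(1−α))), and A₂ = Λ_t · (2(l₂−l₁))^(1/(1−α)). Then Σ_{j=0}^k C(k,j) · Σ_{m=0}^∞ C(m+k−1, m) · exp(−Λ_t · (2m·l₂ + k·l₁ + 2j·(l₂−l₁))^(1/(1−α))) ≤ ((1 + exp(−A₂))/(1 − exp(−B₂·C₂)))^k · exp(−B₂ · k^(1/(1−α))). -/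
private lemma rpow_superadd_s9 {x y p : ℝ} (hx : 0 ≤ x) (hy : 0 ≤ y) (hp : 1 ≤ p) :
    x ^ p + y ^ p ≤ (x + y) ^ p := by
  lift x to NNReal using hx
  lift y to NNReal using hy
  have h := NNReal.add_rpow_le_rpow_add x y hp
  rw [← NNReal.coe_le_coe] at h
  push_cast [NNReal.coe_rpow] at h
  exact_mod_cast h

private lemma nat_mul_rpow {n : ℕ} {y p : ℝ} (hy : 0 ≤ y) (hp : 1 ≤ p) :
    (n : ℝ) * y ^ p ≤ ((n : ℝ) * y) ^ p := by
  rw [Real.mul_rpow n.cast_nonneg hy]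
  have hn : (n : ℝ) ≤ (n : ℝ) ^ p := by
    rcases Nat.eq_zero_or_pos n with h | h
    · subst h; simp [Real.zero_rpow (by linarith : p ≠ 0)]
    · calc (n : ℝ) = (n : ℝ) ^ (1 : ℝ) := (Real.rpow_one _).symm
        _ ≤ (n : ℝ) ^ p := Real.rpow_le_rpow_of_exponent_le (by exact_mod_cast h) hp
  exact mul_le_mul_of_nonneg_right hn (Real.rpow_nonneg hy p)

private lemma key_binom {x : ℝ} (hx : 0 ≤ x) (k c m : ℕ) :
    (k : ℝ) ^ c + (m : ℝ) * ((x + (k : ℝ)) ^ c - (k : ℝ) ^ c)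
      ≤ (x * (m : ℝ) + (k : ℝ)) ^ c := by
  have h1 : (x + (k : ℝ)) ^ c - (k : ℝ) ^ c
      = ∑ i ∈ Finset.range c, x ^ (i + 1) * (k : ℝ) ^ (c - (i + 1)) * (c.choose (i + 1)) := by
    rw [add_pow, Finset.sum_range_succ']
    simp
  have h2 : (x * (m : ℝ) + (k : ℝ)) ^ c
      = (∑ i ∈ Finset.range c,
          (x * (m : ℝ)) ^ (i + 1) * (k : ℝ) ^ (c - (i + 1)) * (c.choose (i + 1)))
        + (k : ℝ) ^ c := by
    rw [add_pow, Finset.sum_range_succ']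
    simp
  rw [h1, h2, Finset.mul_sum, add_comm _ ((k : ℝ) ^ c)]
  gcongr (k : ℝ) ^ c + ?_
  apply Finset.sum_le_sum
  intro i _
  have hm : (m : ℝ) ≤ (m : ℝ) ^ (i + 1) := by
    exact_mod_cast Nat.le_self_pow (by omega) m
  calc (m : ℝ) * (x ^ (i + 1) * (k : ℝ) ^ (c - (i + 1)) * (c.choose (i + 1)))
      ≤ (m : ℝ) ^ (i + 1) * (x ^ (i + 1) * (k : ℝ) ^ (c - (i + 1)) * (c.choose (i + 1))) :=
        mul_le_mul_of_nonneg_right hm (by positivity)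
    _ = (x * (m : ℝ)) ^ (i + 1) * (k : ℝ) ^ (c - (i + 1)) * (c.choose (i + 1)) := by
        rw [mul_pow]; ring

/-- The double-series estimate of Lemma 6.4(ii): with
`Λ_t = (1−α)(α/t)^(α/(1−α))`, `B₂ = Λ_t l₁^(1/(1−α))`, `c = ⌊1/(1−α)⌋`,
`C₂ = ((2l₂/l₁ + k)^c − k^c)^(1/(c(1−α)))` and `A₂ = Λ_t (2(l₂−l₁))^(1/(1−α))`,
`Σ_{j=0}^k C(k,j) Σ_{m≥0} C(m+k−1,m) exp(−Λ_t (2m l₂ + k l₁ + 2j(l₂−l₁))^(1/(1−α)))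
  ≤ ((1+exp(−A₂))/(1−exp(−B₂C₂)))^k exp(−B₂ k^(1/(1−α)))`. -/
theorem sinh_ratio_pow_series_bound
    (α t l₁ l₂ : ℝ) (hα : α ∈ Set.Ioo (0:ℝ) 1) (ht : 0 < t)
    (hl₁ : 0 < l₁) (hl : l₁ < l₂) (k : ℕ) (hk : 1 ≤ k)
    (c : ℕ) (hc : c = ⌊1 / (1 - α)⌋₊)
    (Λt B₂ C₂ A₂ : ℝ)
    (hΛt : Λt = (1 - α) * (α / t) ^ (α / (1 - α)))
    (hB₂ : B₂ = Λt * l₁ ^ (1 / (1 - α)))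
    (hC₂ : C₂ = ((2 * l₂ / l₁ + (k:ℝ)) ^ c - (k:ℝ) ^ c) ^ (1 / ((c:ℝ) * (1 - α))))
    (hA₂ : A₂ = Λt * (2 * (l₂ - l₁)) ^ (1 / (1 - α))) :
    ∑ j ∈ Finset.range (k + 1), (k.choose j : ℝ) *
        ∑' m : ℕ, ((m + k - 1).choose m : ℝ) *
          Real.exp (-Λt *
            (2 * (m:ℝ) * l₂ + (k:ℝ) * l₁ + 2 * (j:ℝ) * (l₂ - l₁)) ^ (1 / (1 - α)))
      ≤ ((1 + Real.exp (-A₂)) / (1 - Real.exp (-B₂ * C₂))) ^ k *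
          Real.exp (-B₂ * (k:ℝ) ^ (1 / (1 - α))) := by
  obtain ⟨hα0, hα1⟩ := hα
  have h1α : 0 < 1 - α := by linarith
  set p : ℝ := 1 / (1 - α) with hp_def
  have hp1 : 1 ≤ p := one_le_one_div h1α (by linarith)
  have hp0 : 0 < p := lt_of_lt_of_le one_pos hp1
  have hl₂ : 0 < l₂ := hl₁.trans hl
  have hΛ : 0 < Λt := by
    rw [hΛt]
    have : (0:ℝ) < (α / t) ^ (α / (1 - α)) := Real.rpow_pos_of_pos (by positivity) _
    positivity
  have hc1 : 1 ≤ c := by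
    rw [hc]; exact Nat.le_floor (by exact_mod_cast hp1)
  have hc0 : (0:ℝ) < c := by exact_mod_cast hc1
  have hcp : (c:ℝ) ≤ p := by rw [hc]; exact Nat.floor_le hp0.le
  set q : ℝ := p / c with hq_def
  have hq1 : 1 ≤ q := (one_le_div hc0).2 hcp
  set x : ℝ := 2 * l₂ / l₁ with hx_def
  have hx : 0 < x := by positivity
  have hkpos : (0:ℝ) < k := by exact_mod_cast hk
  set D : ℝ := (x + (k:ℝ)) ^ c - (k:ℝ) ^ c with hD_def
  have hD : 0 < D := by
    have : (k:ℝ) ^ c < (x + (k:ℝ)) ^ c := by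
      apply pow_lt_pow_left₀ (by linarith) (by positivity) (by omega)
    simp only [hD_def]; linarith
  have hqeq : 1 / ((c:ℝ) * (1 - α)) = q := by
    rw [hq_def, hp_def, div_div, mul_comm]
  have hC₂eq : C₂ = D ^ q := by rw [hC₂, hqeq]
  have hC₂pos : 0 < C₂ := by rw [hC₂eq]; exact Real.rpow_pos_of_pos hD _
  have hB₂pos : 0 < B₂ := by
    rw [hB₂]
    have : (0:ℝ) < l₁ ^ p := Real.rpow_pos_of_pos hl₁ _
    positivity
  set s : ℝ := Real.exp (-A₂) with hs_def
  have hs0 : 0 < s := Real.exp_pos _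
  set r : ℝ := Real.exp (-B₂ * C₂) with hr_def
  have hr0 : 0 < r := Real.exp_pos _
  have hr1 : r < 1 := by
    rw [hr_def, Real.exp_lt_one_iff, neg_mul]
    have : 0 < B₂ * C₂ := mul_pos hB₂pos hC₂pos
    linarith
  have h1r : 0 < 1 - r := by linarith
  -- the key pointwise exponent estimate
  have key : ∀ j m : ℕ,
      B₂ * (k:ℝ) ^ p + (m:ℝ) * (B₂ * C₂) + (j:ℝ) * A₂
        ≤ Λt * (2 * (m:ℝ) * l₂ + (k:ℝ) * l₁ + 2 * (j:ℝ) * (l₂ - l₁)) ^ p := by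
    intro j m
    have hS : 2 * (m:ℝ) * l₂ + (k:ℝ) * l₁ = l₁ * (x * m + k) := by
      rw [hx_def]; field_simp
    have hSnn : 0 ≤ 2 * (m:ℝ) * l₂ + (k:ℝ) * l₁ := by positivity
    have hTnn : 0 ≤ 2 * (j:ℝ) * (l₂ - l₁) := by
      have : (0:ℝ) ≤ l₂ - l₁ := by linarith
      positivity
    have step1 : (2 * (m:ℝ) * l₂ + (k:ℝ) * l₁) ^ p + (2 * (j:ℝ) * (l₂ - l₁)) ^ p
        ≤ (2 * (m:ℝ) * l₂ + (k:ℝ) * l₁ + 2 * (j:ℝ) * (l₂ - l₁)) ^ p :=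
      rpow_superadd_s9 hSnn hTnn hp1
    have stepT : (j:ℝ) * (2 * (l₂ - l₁)) ^ p ≤ (2 * (j:ℝ) * (l₂ - l₁)) ^ p := by
      rw [show 2 * (j:ℝ) * (l₂ - l₁) = (j:ℝ) * (2 * (l₂ - l₁)) by ring]
      exact nat_mul_rpow (by linarith) hp1
    have stepS : B₂ * (k:ℝ) ^ p + (m:ℝ) * (B₂ * C₂)
        ≤ Λt * (2 * (m:ℝ) * l₂ + (k:ℝ) * l₁) ^ p := by
      rw [hS, Real.mul_rpow hl₁.le (by positivity)]
      have ha : (0:ℝ) < x * m + k := by positivity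
      have h4 : (k:ℝ) ^ p + (m:ℝ) * C₂ ≤ (x * (m:ℝ) + (k:ℝ)) ^ p := by
        have e1 : (x * (m:ℝ) + (k:ℝ)) ^ p = ((x * (m:ℝ) + (k:ℝ)) ^ c) ^ q := by
          rw [← Real.rpow_natCast (x * (m:ℝ) + (k:ℝ)) c, ← Real.rpow_mul ha.le]
          congr 1
          rw [hq_def]
          field_simp
        have e5 : ((k:ℝ) ^ c) ^ q = (k:ℝ) ^ p := by
          rw [← Real.rpow_natCast (k:ℝ) c, ← Real.rpow_mul (Nat.cast_nonneg k)]
          congr 1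
          rw [hq_def]
          field_simp
        have e4 : (m:ℝ) * C₂ ≤ ((m:ℝ) * D) ^ q := by
          rw [hC₂eq]; exact nat_mul_rpow hD.le hq1
        have e3 : ((k:ℝ) ^ c) ^ q + ((m:ℝ) * D) ^ q ≤ ((k:ℝ) ^ c + (m:ℝ) * D) ^ q :=
          rpow_superadd_s9 (by positivity) (by positivity) hq1
        have e2 : ((k:ℝ) ^ c + (m:ℝ) * D) ^ q ≤ ((x * (m:ℝ) + (k:ℝ)) ^ c) ^ q := by
          apply Real.rpow_le_rpow (by positivity) (key_binom hx.le k c m)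
            (by linarith)
        calc (k:ℝ) ^ p + (m:ℝ) * C₂ ≤ ((k:ℝ) ^ c) ^ q + ((m:ℝ) * D) ^ q := by
              rw [e5]; exact add_le_add (le_refl _) e4
          _ ≤ ((k:ℝ) ^ c + (m:ℝ) * D) ^ q := e3
          _ ≤ ((x * (m:ℝ) + (k:ℝ)) ^ c) ^ q := e2
          _ = (x * (m:ℝ) + (k:ℝ)) ^ p := e1.symm
      calc B₂ * (k:ℝ) ^ p + (m:ℝ) * (B₂ * C₂) = B₂ * ((k:ℝ) ^ p + (m:ℝ) * C₂) := by ring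
        _ ≤ B₂ * (x * (m:ℝ) + (k:ℝ)) ^ p := by
            exact mul_le_mul_of_nonneg_left h4 hB₂pos.le
        _ = Λt * (l₁ ^ p * (x * (m:ℝ) + (k:ℝ)) ^ p) := by rw [hB₂]; ring
    calc B₂ * (k:ℝ) ^ p + (m:ℝ) * (B₂ * C₂) + (j:ℝ) * A₂
        ≤ Λt * (2 * (m:ℝ) * l₂ + (k:ℝ) * l₁) ^ p + Λt * (2 * (j:ℝ) * (l₂ - l₁)) ^ p := by
          apply add_le_add stepS
          rw [hA₂]
          calc (j:ℝ) * (Λt * (2 * (l₂ - l₁)) ^ p)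
              = Λt * ((j:ℝ) * (2 * (l₂ - l₁)) ^ p) := by ring
            _ ≤ Λt * (2 * (j:ℝ) * (l₂ - l₁)) ^ p :=
                mul_le_mul_of_nonneg_left stepT hΛ.le
      _ = Λt * ((2 * (m:ℝ) * l₂ + (k:ℝ) * l₁) ^ p + (2 * (j:ℝ) * (l₂ - l₁)) ^ p) := by ring
      _ ≤ Λt * (2 * (m:ℝ) * l₂ + (k:ℝ) * l₁ + 2 * (j:ℝ) * (l₂ - l₁)) ^ p :=
          mul_le_mul_of_nonneg_left step1 hΛ.le
  -- choose identity
  have hchoose : ∀ m : ℕ, ((m + k - 1).choose m : ℝ) = ((m + (k - 1)).choose (k - 1) : ℝ) := by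
    intro m
    have h := Nat.choose_symm (Nat.le_add_right m (k - 1))
    rw [Nat.add_sub_cancel_left] at h
    rw [show m + k - 1 = m + (k - 1) by omega, ← h]
  -- the geometric-binomial series
  have hsum_g : HasSum (fun m : ℕ => ((m + (k - 1)).choose (k - 1) : ℝ) * r ^ m)
      (1 / (1 - r) ^ k) := by
    have h := hasSum_choose_mul_geometric_of_norm_lt_one (𝕜 := ℝ) (k - 1)
      (r := r) (by rw [Real.norm_eq_abs, abs_of_pos hr0]; exact hr1)
    rwa [show k - 1 + 1 = k by omega] at h
  -- pointwise bound on summands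
  have hbound : ∀ j m : ℕ,
      ((m + k - 1).choose m : ℝ) *
          Real.exp (-Λt * (2 * (m:ℝ) * l₂ + (k:ℝ) * l₁ + 2 * (j:ℝ) * (l₂ - l₁)) ^ p)
        ≤ (Real.exp (-(B₂ * (k:ℝ) ^ p)) * s ^ j) *
            (((m + (k - 1)).choose (k - 1) : ℝ) * r ^ m) := by
    intro j m
    rw [hchoose m]
    have hexp : Real.exp (-Λt * (2 * (m:ℝ) * l₂ + (k:ℝ) * l₁ + 2 * (j:ℝ) * (l₂ - l₁)) ^ p)
        ≤ Real.exp (-(B₂ * (k:ℝ) ^ p)) * s ^ j * r ^ m := by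
      rw [hs_def, hr_def, ← Real.exp_nat_mul, ← Real.exp_nat_mul, ← Real.exp_add,
        ← Real.exp_add, Real.exp_le_exp]
      have := key j m
      nlinarith [key j m]
    calc ((m + (k - 1)).choose (k - 1) : ℝ) *
          Real.exp (-Λt * (2 * (m:ℝ) * l₂ + (k:ℝ) * l₁ + 2 * (j:ℝ) * (l₂ - l₁)) ^ p)
        ≤ ((m + (k - 1)).choose (k - 1) : ℝ) *
            (Real.exp (-(B₂ * (k:ℝ) ^ p)) * s ^ j * r ^ m) :=
          mul_le_mul_of_nonneg_left hexp (Nat.cast_nonneg _)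
      _ = (Real.exp (-(B₂ * (k:ℝ) ^ p)) * s ^ j) *
            (((m + (k - 1)).choose (k - 1) : ℝ) * r ^ m) := by ring
  -- inner tsum bound
  have inner_le : ∀ j : ℕ,
      (∑' m : ℕ, ((m + k - 1).choose m : ℝ) *
          Real.exp (-Λt * (2 * (m:ℝ) * l₂ + (k:ℝ) * l₁ + 2 * (j:ℝ) * (l₂ - l₁)) ^ p))
        ≤ (Real.exp (-(B₂ * (k:ℝ) ^ p)) * s ^ j) * (1 / (1 - r) ^ k) := by
    intro j
    have hsum2 : Summable (fun m : ℕ => (Real.exp (-(B₂ * (k:ℝ) ^ p)) * s ^ j) *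
        (((m + (k - 1)).choose (k - 1) : ℝ) * r ^ m)) :=
      hsum_g.summable.mul_left _
    have hsumf : Summable (fun m : ℕ => ((m + k - 1).choose m : ℝ) *
        Real.exp (-Λt * (2 * (m:ℝ) * l₂ + (k:ℝ) * l₁ + 2 * (j:ℝ) * (l₂ - l₁)) ^ p)) := by
      apply Summable.of_nonneg_of_le (fun m => by positivity) (hbound j) hsum2
    calc (∑' m : ℕ, ((m + k - 1).choose m : ℝ) *
          Real.exp (-Λt * (2 * (m:ℝ) * l₂ + (k:ℝ) * l₁ + 2 * (j:ℝ) * (l₂ - l₁)) ^ p))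
        ≤ ∑' m : ℕ, (Real.exp (-(B₂ * (k:ℝ) ^ p)) * s ^ j) *
            (((m + (k - 1)).choose (k - 1) : ℝ) * r ^ m) :=
          Summable.tsum_le_tsum (hbound j) hsumf hsum2
      _ = (Real.exp (-(B₂ * (k:ℝ) ^ p)) * s ^ j) * (1 / (1 - r) ^ k) := by
          rw [tsum_mul_left, hsum_g.tsum_eq]
  -- outer sum
  have houter : ∑ j ∈ Finset.range (k + 1), (k.choose j : ℝ) *
        (∑' m : ℕ, ((m + k - 1).choose m : ℝ) *
          Real.exp (-Λt * (2 * (m:ℝ) * l₂ + (k:ℝ) * l₁ + 2 * (j:ℝ) * (l₂ - l₁)) ^ p))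
      ≤ ∑ j ∈ Finset.range (k + 1), (k.choose j : ℝ) *
          ((Real.exp (-(B₂ * (k:ℝ) ^ p)) * s ^ j) * (1 / (1 - r) ^ k)) := by
    apply Finset.sum_le_sum
    intro j _
    exact mul_le_mul_of_nonneg_left (inner_le j) (Nat.cast_nonneg _)
  have hbinom : ∑ j ∈ Finset.range (k + 1), (k.choose j : ℝ) *
        ((Real.exp (-(B₂ * (k:ℝ) ^ p)) * s ^ j) * (1 / (1 - r) ^ k))
      = (1 + s) ^ k * (1 / (1 - r) ^ k) * Real.exp (-(B₂ * (k:ℝ) ^ p)) := by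
    have h := add_pow s 1 k
    simp only [one_pow, mul_one] at h
    rw [show (1:ℝ) + s = s + 1 by ring, h, Finset.sum_mul, Finset.sum_mul]
    apply Finset.sum_congr rfl
    intro j _
    ring
  refine le_trans houter ?_
  rw [hbinom]
  have : ((1 + s) / (1 - r)) ^ k = (1 + s) ^ k * (1 / (1 - r) ^ k) := by
    rw [div_pow]
    field_simp
  rw [this, neg_mul]
end

section
/- Let α ∈ (0,1), let t > 0, let l₁ > 0 and l₂ > 0, and set Λ = (1−α)·α^(α/(1−α)). Then Σ_{n=0}^∞ exp(−Λ·((l₁ + n·l₂)/t^α)^(1/(1−α))) ≤ (1 + t^α·Γ(2−α)/(l₂·Λ^(1−α))) · exp(−Λ·(l₁/t^α)^(1/(1−α))), where Γ is the Gamma function. -/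
open Real Set MeasureTheory

lemma add_rpow_le_real_aux {a b p : ℝ} (ha : 0 ≤ a) (hb : 0 ≤ b) (hp : 1 ≤ p) :
    a ^ p + b ^ p ≤ (a + b) ^ p := by
  lift a to NNReal using ha
  lift b to NNReal using hb
  have h := NNReal.add_rpow_le_rpow_add a b hp
  exact_mod_cast h

/-- Lemma 7.1 (estimate_1): with `Λ = (1−α)α^(α/(1−α))`,
`Σ_{n≥0} exp(−Λ((l₁+n l₂)/t^α)^(1/(1−α)))
  ≤ (1 + t^α Γ(2−α)/(l₂ Λ^(1−α))) exp(−Λ(l₁/t^α)^(1/(1−α)))`. -/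
theorem exp_series_shift_bound
    (α t l₁ l₂ : ℝ) (hα : α ∈ Set.Ioo (0:ℝ) 1) (ht : 0 < t)
    (hl₁ : 0 < l₁) (hl₂ : 0 < l₂)
    (Λ : ℝ) (hΛ : Λ = (1 - α) * α ^ (α / (1 - α))) :
    ∑' n : ℕ, Real.exp (-Λ * ((l₁ + (n:ℝ) * l₂) / t ^ α) ^ (1 / (1 - α)))
      ≤ (1 + t ^ α * Real.Gamma (2 - α) / (l₂ * Λ ^ (1 - α))) *
          Real.exp (-Λ * (l₁ / t ^ α) ^ (1 / (1 - α))) := by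
  obtain ⟨hα0, hα1⟩ := hα
  have h1α : 0 < 1 - α := by linarith
  have hΛ0 : 0 < Λ := by
    rw [hΛ]; exact mul_pos h1α (rpow_pos_of_pos hα0 _)
  set β : ℝ := 1 / (1 - α) with hβdef
  have hβ1 : 1 ≤ β := by
    rw [hβdef, le_div_iff₀ h1α]; linarith
  have hβ0 : 0 < β := lt_of_lt_of_le one_pos hβ1
  have hβinv : 1 / β = 1 - α := by
    rw [hβdef, one_div_one_div]
  set T : ℝ := t ^ α with hTdef
  have hT : 0 < T := rpow_pos_of_pos ht α
  set x0 : ℝ := l₁ / T with hx0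
  have hx0pos : 0 < x0 := div_pos hl₁ hT
  set d : ℝ := l₂ / T with hd
  have hdpos : 0 < d := div_pos hl₂ hT
  set c : ℝ := Λ * d ^ β with hc
  have hcpos : 0 < c := mul_pos hΛ0 (rpow_pos_of_pos hdpos β)
  set E : ℝ := Real.exp (-Λ * x0 ^ β) with hE
  set I : ℝ := T * Real.Gamma (2 - α) / (l₂ * Λ ^ (1 - α)) with hI
  have hΓ : 0 < Real.Gamma (2 - α) := Real.Gamma_pos_of_pos (by linarith)
  have hIpos : 0 < I :=
    div_pos (mul_pos hT hΓ) (mul_pos hl₂ (rpow_pos_of_pos hΛ0 _))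
  set g : ℝ → ℝ := fun x => Real.exp (-(c * x ^ β)) with hg
  -- per-term bound
  have hbound : ∀ n : ℕ,
      Real.exp (-Λ * ((l₁ + (n:ℝ) * l₂) / T) ^ β) ≤ E * g n := by
    intro n
    have hxn : (l₁ + (n:ℝ) * l₂) / T = x0 + (n:ℝ) * d := by
      rw [hx0, hd]; field_simp
    have h1 : x0 ^ β + ((n:ℝ) * d) ^ β ≤ (x0 + (n:ℝ) * d) ^ β :=
      add_rpow_le_real_aux hx0pos.le (by positivity) hβ1
    have h2 : ((n:ℝ) * d) ^ β = (n:ℝ) ^ β * d ^ β :=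
      Real.mul_rpow n.cast_nonneg hdpos.le
    have h3 : -Λ * (x0 + (n:ℝ) * d) ^ β ≤ -Λ * x0 ^ β + -(c * (n:ℝ) ^ β) := by
      rw [h2] at h1
      have := mul_le_mul_of_nonneg_left h1 hΛ0.le
      rw [hc]; nlinarith
    calc Real.exp (-Λ * ((l₁ + (n:ℝ) * l₂) / T) ^ β)
        = Real.exp (-Λ * (x0 + (n:ℝ) * d) ^ β) := by rw [hxn]
      _ ≤ Real.exp (-Λ * x0 ^ β + -(c * (n:ℝ) ^ β)) := Real.exp_le_exp.2 h3
      _ = E * g (n:ℝ) := by rw [Real.exp_add]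
  -- integrability of g on Ioi 0
  have hInt : IntegrableOn g (Ioi (0:ℝ)) := by
    have h := integrableOn_rpow_mul_exp_neg_mul_rpow
      (s := 0) (p := β) (b := c) (by norm_num) hβ0 hcpos
    refine h.congr_fun (fun x _ => ?_) measurableSet_Ioi
    simp [hg, Real.rpow_zero, neg_mul]
  have hgnn : ∀ x : ℝ, 0 ≤ g x := fun x => (Real.exp_pos _).le
  -- value of the full integral
  have hβne : β ≠ 0 := hβ0.ne'
  have hval : ∫ x in Ioi (0:ℝ), g x = I := by
    have heq : ∫ x in Ioi (0:ℝ), g x = ∫ x in Ioi (0:ℝ), Real.exp (-c * x ^ β) := by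
      congr 1; ext x; rw [hg]; ring_nf
    rw [heq, integral_exp_neg_mul_rpow hβ0 hcpos]
    have hc' : c ^ (-1 / β) = Λ ^ (-(1 - α)) * (T / l₂) := by
      rw [hc, Real.mul_rpow hΛ0.le (rpow_pos_of_pos hdpos β).le,
        ← Real.rpow_mul hdpos.le]
      have hm : β * (-1 / β) = -1 := by field_simp
      rw [hm, Real.rpow_neg_one, neg_div, hβinv, hd, inv_div]
    rw [hc', hβinv, show (1:ℝ) - α + 1 = 2 - α by ring,
      Real.rpow_neg hΛ0.le, hI]
    have hΛα : (0:ℝ) < Λ ^ (1 - α) := rpow_pos_of_pos hΛ0 _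
    field_simp
  -- main bound via partial sums
  apply Real.tsum_le_of_sum_range_le (fun n => (Real.exp_pos _).le)
  intro N
  match N with
  | 0 =>
    simp only [Finset.range_zero, Finset.sum_empty]
    positivity
  | Nat.succ m =>
    rw [Finset.sum_range_succ']
    have hf0 : Real.exp (-Λ * ((l₁ + ((0:ℕ):ℝ) * l₂) / T) ^ β) = E := by
      rw [hE, hx0]; norm_num
    have hanti : AntitoneOn g (Icc (0:ℝ) (0 + (m:ℕ))) := by
      intro x hx y hy hxy
      simp only [hg]
      exact Real.exp_le_exp.2 (neg_le_neg
        (mul_le_mul_of_nonneg_left (Real.rpow_le_rpow hx.1 hxy hβ0.le) hcpos.le))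
    have hint := hanti.sum_le_integral
    have hIoc : ∫ x in (0:ℝ)..(0 + (m:ℕ)), g x ≤ ∫ x in Ioi (0:ℝ), g x := by
      rw [intervalIntegral.integral_of_le (by positivity)]
      exact setIntegral_mono_set hInt (ae_of_all _ hgnn)
        (HasSubset.Subset.eventuallyLE Ioc_subset_Ioi_self)
    have hkey : ∑ i ∈ Finset.range m, g ((0:ℝ) + ((i + 1 : ℕ):ℝ)) ≤ I := by
      calc ∑ i ∈ Finset.range m, g ((0:ℝ) + ((i + 1 : ℕ):ℝ))
          ≤ ∫ x in (0:ℝ)..(0 + (m:ℕ)), g x := hint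
        _ ≤ ∫ x in Ioi (0:ℝ), g x := hIoc
        _ = I := hval
    calc (∑ i ∈ Finset.range m,
            Real.exp (-Λ * ((l₁ + ((i + 1 : ℕ):ℝ) * l₂) / T) ^ β))
          + Real.exp (-Λ * ((l₁ + ((0:ℕ):ℝ) * l₂) / T) ^ β)
        ≤ (∑ i ∈ Finset.range m, E * g ((i + 1 : ℕ):ℝ)) + E := by
          refine add_le_add (Finset.sum_le_sum fun i _ => hbound (i + 1)) hf0.le
      _ = E * (∑ i ∈ Finset.range m, g ((0:ℝ) + ((i + 1 : ℕ):ℝ))) + E := by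
          rw [Finset.mul_sum]; simp [zero_add]
      _ ≤ E * I + E := by
          exact add_le_add (mul_le_mul_of_nonneg_left hkey (Real.exp_pos _).le)
            le_rfl
      _ = (1 + I) * E := by ring
end

section
/- Let α ∈ (0,1), let t > 0, let l₂ > 0, and set Λ = (1−α)·α^(α/(1−α)). Then Σ_{n=0}^∞ exp(−Λ·(n·l₂/t^α)^(1/(1−α))) ≤ 1 + t^α·Γ(2−α)/(l₂·Λ^(1−α)), where Γ is the Gamma function. -/
open Real Set MeasureTheory

/-- The sum-versus-integral comparison concluding the proof of Lemma 7.1: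
with `Λ = (1−α)α^(α/(1−α))`,
`Σ_{n≥0} exp(−Λ(n l₂/t^α)^(1/(1−α))) ≤ 1 + t^α Γ(2−α)/(l₂ Λ^(1−α))`. -/
theorem exp_series_le_one_add_gamma
    (α t l₂ : ℝ) (hα : α ∈ Set.Ioo (0:ℝ) 1) (ht : 0 < t) (hl₂ : 0 < l₂)
    (Λ : ℝ) (hΛ : Λ = (1 - α) * α ^ (α / (1 - α))) :
    ∑' n : ℕ, Real.exp (-Λ * ((n:ℝ) * l₂ / t ^ α) ^ (1 / (1 - α)))
      ≤ 1 + t ^ α * Real.Gamma (2 - α) / (l₂ * Λ ^ (1 - α)) := by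
  obtain ⟨hα0, hα1⟩ := hα
  have h1α : (0:ℝ) < 1 - α := by linarith
  set p : ℝ := 1 / (1 - α) with hpdef
  have hp0 : 0 < p := by positivity
  have hp1 : 1 ≤ p := by
    rw [hpdef, le_div_iff₀ h1α]; linarith
  have hΛpos : 0 < Λ := by
    rw [hΛ]; positivity
  have htα : 0 < t ^ α := rpow_pos_of_pos ht α
  set c : ℝ := l₂ / t ^ α with hcdef
  have hcpos : 0 < c := div_pos hl₂ htα
  set b : ℝ := Λ * c ^ p with hbdef
  have hbpos : 0 < b := by positivity
  set g : ℝ → ℝ := fun x => Real.exp (-b * x ^ p) with hgdef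
  -- the summand equals g n
  have hfg : ∀ n : ℕ, Real.exp (-Λ * ((n:ℝ) * l₂ / t ^ α) ^ p) = g n := by
    intro n
    simp only [hgdef]
    congr 1
    rw [mul_div_assoc, ← hcdef, Real.mul_rpow (Nat.cast_nonneg n) hcpos.le]
    ring
  -- integrability of g on (0,∞)
  have hint : IntegrableOn g (Ioi (0:ℝ)) := by
    have h := integrableOn_rpow_mul_exp_neg_mul_rpow (s := 0) (p := p) (b := b)
      (by norm_num) hp0 hbpos
    refine h.congr_fun (fun x _ => ?_) measurableSet_Ioi
    simp [hgdef]
  -- value of the integral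
  have hval : ∫ x in Ioi (0:ℝ), g x = t ^ α * Real.Gamma (2 - α) / (l₂ * Λ ^ (1 - α)) := by
    rw [hgdef]
    rw [integral_exp_neg_mul_rpow hp0 hbpos]
    have h1p : 1 / p = 1 - α := by
      rw [hpdef]; field_simp
    have hbpow : b ^ (-1 / p) = t ^ α / (l₂ * Λ ^ (1 - α)) := by
      rw [hbdef, neg_div, h1p, Real.rpow_neg hbpos.le,
        Real.mul_rpow hΛpos.le (rpow_pos_of_pos hcpos p).le,
        ← Real.rpow_mul hcpos.le p (1 - α),
        show p * (1 - α) = 1 by rw [hpdef]; field_simp,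
        Real.rpow_one, hcdef]
      field_simp
    rw [hbpow, h1p]
    have : (1 - α) + 1 = 2 - α := by ring
    rw [this]
    ring
  have hInonneg : 0 ≤ t ^ α * Real.Gamma (2 - α) / (l₂ * Λ ^ (1 - α)) := by
    rw [← hval]
    exact setIntegral_nonneg measurableSet_Ioi fun x _ => (Real.exp_pos _).le
  -- antitone
  have hanti : ∀ m : ℝ, AntitoneOn g (Icc (0:ℝ) m) := by
    intro m x hx y hy hxy
    apply Real.exp_le_exp.2
    rw [neg_mul, neg_mul, neg_le_neg_iff]
    exact mul_le_mul_of_nonneg_left (Real.rpow_le_rpow hx.1 hxy hp0.le) hbpos.le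
  -- main bound on partial sums
  have hpartial : ∀ n : ℕ, ∑ i ∈ Finset.range n, g i
      ≤ 1 + t ^ α * Real.Gamma (2 - α) / (l₂ * Λ ^ (1 - α)) := by
    intro n
    cases n with
    | zero => simpa using by linarith
    | succ m =>
      rw [Finset.sum_range_succ']
      have hg0 : g 0 = 1 := by
        simp [hgdef, Real.zero_rpow (ne_of_gt hp0)]
      rw [Nat.cast_zero, hg0]
      have hsum : ∑ i ∈ Finset.range m, g ((i:ℝ) + 1) ≤ ∫ x in (0:ℝ)..(m:ℝ), g x := by
        have := (hanti ((0:ℝ) + m)).sum_le_integral (x₀ := 0) (a := m)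
        simpa [Nat.cast_add] using this
      have hintle : ∫ x in (0:ℝ)..(m:ℝ), g x
          ≤ t ^ α * Real.Gamma (2 - α) / (l₂ * Λ ^ (1 - α)) := by
        rw [intervalIntegral.integral_of_le (Nat.cast_nonneg m), ← hval]
        apply setIntegral_mono_set hint
        · exact Filter.Eventually.of_forall fun x => (Real.exp_pos _).le
        · exact Filter.Eventually.of_forall fun x hx => hx.1
      have : ∑ i ∈ Finset.range m, g ((i:ℕ) + 1 : ℕ) ≤ ∫ x in (0:ℝ)..(m:ℝ), g x := by
        convert hsum using 2 with i
        push_cast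
        ring_nf
      linarith [this.trans hintle]
  calc ∑' n : ℕ, Real.exp (-Λ * ((n:ℝ) * l₂ / t ^ α) ^ (1 / (1 - α)))
      = ∑' n : ℕ, g n := by rw [← hpdef]; exact tsum_congr hfg
    _ ≤ 1 + t ^ α * Real.Gamma (2 - α) / (l₂ * Λ ^ (1 - α)) :=
        Real.tsum_le_of_sum_range_le (fun n => (Real.exp_pos _).le) hpartial
end

section
/- Let α ∈ (0,1), let θ ∈ (−π/2, π/2), let p > 0, and let 0 ≤ l₁ < l₂ be real numbers. For r > 0 set s = r·exp(iθ) ∈ ℂ and let s^α denote the principal complex power. Then r^p · |sinh(l₁·s^α)| / |sinh(l₂·s^α)| tends to 0 as r → ∞. -/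
open Filter

private lemma abs_sinh_le (z : ℂ) :
    ‖Complex.sinh z‖ ≤ (Real.exp z.re + Real.exp (-z.re)) / 2 := by
  have h : Complex.sinh z = (Complex.exp z - Complex.exp (-z)) / 2 := rfl
  rw [h, norm_div]
  have h2 : ‖(2 : ℂ)‖ = 2 := by norm_num
  rw [h2]
  gcongr
  calc ‖Complex.exp z - Complex.exp (-z)‖
      ≤ ‖Complex.exp z‖ + ‖Complex.exp (-z)‖ := norm_sub_le _ _
    _ = Real.exp z.re + Real.exp (-z.re) := by
        simp [Complex.norm_exp]

private lemma le_abs_sinh (z : ℂ) :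
    (Real.exp z.re - Real.exp (-z.re)) / 2 ≤ ‖Complex.sinh z‖ := by
  have h : Complex.sinh z = (Complex.exp z - Complex.exp (-z)) / 2 := rfl
  rw [h, norm_div]
  have h2 : ‖(2 : ℂ)‖ = 2 := by norm_num
  rw [h2]
  gcongr
  calc Real.exp z.re - Real.exp (-z.re)
      = ‖Complex.exp z‖ - ‖Complex.exp (-z)‖ := by
        simp [Complex.norm_exp]
    _ ≤ ‖Complex.exp z - Complex.exp (-z)‖ := norm_sub_norm_le _ _

/-- The decay estimate in the proof of Lemma 5.2(i): along the ray
`s = r e^{iθ}` with `|θ| < π/2`, for `0 ≤ l₁ < l₂` and any `p > 0`,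
`r^p |sinh(l₁ s^α)| / |sinh(l₂ s^α)| → 0` as `r → ∞`. -/
theorem sinh_ratio_ray_decay
    (α θ p l₁ l₂ : ℝ) (hα : α ∈ Set.Ioo (0:ℝ) 1)
    (hθ : θ ∈ Set.Ioo (-(Real.pi / 2)) (Real.pi / 2)) (hp : 0 < p)
    (hl₁ : 0 ≤ l₁) (hl : l₁ < l₂) :
    Tendsto (fun r : ℝ =>
        r ^ p *
          ‖Complex.sinh ((l₁ : ℂ) *
            ((r : ℂ) * Complex.exp ((θ : ℂ) * Complex.I)) ^ (α : ℂ))‖ /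
          ‖Complex.sinh ((l₂ : ℂ) *
            ((r : ℂ) * Complex.exp ((θ : ℂ) * Complex.I)) ^ (α : ℂ))‖)
      atTop (nhds 0) := by
  obtain ⟨hα0, hα1⟩ := hα
  obtain ⟨hθ1, hθ2⟩ := hθ
  have hπ : 0 < Real.pi := Real.pi_pos
  -- cos (αθ) > 0
  have hαθ : |α * θ| < Real.pi / 2 := by
    rw [abs_mul, abs_of_pos hα0]
    have hθabs : |θ| < Real.pi / 2 := abs_lt.mpr ⟨hθ1, hθ2⟩
    nlinarith [abs_nonneg θ]
  set c := Real.cos (α * θ) with hc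
  have hcpos : 0 < c :=
    Real.cos_pos_of_mem_Ioo ⟨(abs_lt.mp hαθ).1, (abs_lt.mp hαθ).2⟩
  have hl₂ : 0 < l₂ := lt_of_le_of_lt hl₁ hl
  set d := (l₂ - l₁) * c with hd
  have hdpos : 0 < d := mul_pos (by linarith) hcpos
  -- the power along the ray
  have hpow : ∀ r : ℝ, 0 < r →
      ((r : ℂ) * Complex.exp ((θ : ℂ) * Complex.I)) ^ (α : ℂ)
        = Complex.exp (((α * Real.log r : ℝ) : ℂ)
            + ((α * θ : ℝ) : ℂ) * Complex.I) := by
    intro r hr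
    have hz : ((r : ℂ) * Complex.exp ((θ : ℂ) * Complex.I))
        = Complex.exp (((Real.log r : ℝ) : ℂ) + (θ : ℂ) * Complex.I) := by
      rw [Complex.exp_add]
      congr 1
      rw [← Complex.ofReal_exp, Real.exp_log hr]
    have him1 : (((Real.log r : ℝ) : ℂ) + (θ : ℂ) * Complex.I).im = θ := by
      simp
    have hne : ((r : ℂ) * Complex.exp ((θ : ℂ) * Complex.I)) ≠ 0 := by
      rw [hz]; exact Complex.exp_ne_zero _
    rw [Complex.cpow_def_of_ne_zero hne, hz, Complex.log_exp (by rw [him1]; linarith)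
      (by rw [him1]; linarith)]
    congr 1
    push_cast
    ring
  -- real parts
  have hre : ∀ (l r : ℝ), 0 < r →
      (((l : ℂ) * ((r : ℂ) * Complex.exp ((θ : ℂ) * Complex.I)) ^ (α : ℂ)).re)
        = l * (r ^ α * c) := by
    intro l r hr
    rw [hpow r hr]
    have : (((α * Real.log r : ℝ) : ℂ) + ((α * θ : ℝ) : ℂ) * Complex.I).re
        = α * Real.log r := by simp
    simp only [Complex.mul_re, Complex.ofReal_re, Complex.ofReal_im, Complex.exp_re,
      Complex.exp_im, zero_mul, sub_zero]
    rw [this]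
    have him : (((α * Real.log r : ℝ) : ℂ) + ((α * θ : ℝ) : ℂ) * Complex.I).im
        = α * θ := by simp
    rw [him, Real.rpow_def_of_pos hr, mul_comm (Real.log r) α, hc]
  -- limit of the dominating function
  have h2 : Tendsto (fun r : ℝ => r ^ α) atTop atTop := tendsto_rpow_atTop hα0
  have hbound : Tendsto (fun r : ℝ => 4 * r ^ p * Real.exp (-(d * r ^ α)))
      atTop (nhds 0) := by
    have h1 : Tendsto (fun x : ℝ => 4 * (x ^ (p / α) * Real.exp (-d * x)))
        atTop (nhds 0) := by
      simpa using
        (tendsto_rpow_mul_exp_neg_mul_atTop_nhds_zero (p / α) d hdpos).const_mul 4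
    have h3 := h1.comp h2
    apply h3.congr'
    filter_upwards [eventually_ge_atTop (0 : ℝ)] with r hr
    simp only [Function.comp]
    rw [← Real.rpow_mul hr, mul_div_cancel₀ p (ne_of_gt hα0)]
    ring_nf
  -- squeeze
  apply squeeze_zero' _ _ hbound
  · filter_upwards [eventually_ge_atTop (0 : ℝ)] with r hr
    have := Real.rpow_nonneg hr p
    exact div_nonneg (mul_nonneg this (norm_nonneg _)) (norm_nonneg _)
  · filter_upwards [eventually_gt_atTop (0 : ℝ),
      h2.eventually_ge_atTop (1 / (l₂ * c))] with r hr hr2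
    have hx : 0 < r ^ α := Real.rpow_pos_of_pos hr α
    set x := r ^ α with hxdef
    have hb1 : 1 ≤ l₂ * c * x := by
      rw [div_le_iff₀ (mul_pos hl₂ hcpos)] at hr2
      linarith [hr2]
    set a := l₁ * (x * c) with ha
    set b := l₂ * (x * c) with hb
    have ha0 : 0 ≤ a := by positivity
    have hb1' : 1 ≤ b := by rw [hb]; nlinarith
    have hEb2 : 2 ≤ Real.exp b := by
      have := Real.add_one_le_exp (1 : ℝ)
      have h1b := Real.exp_le_exp.mpr hb1'
      linarith
    -- numerator bound
    have hnum : ‖Complex.sinh ((l₁ : ℂ) *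
        ((r : ℂ) * Complex.exp ((θ : ℂ) * Complex.I)) ^ (α : ℂ))‖ ≤ Real.exp a := by
      refine le_trans (abs_sinh_le _) ?_
      rw [hre l₁ r hr]
      have h1 : Real.exp (-(l₁ * (x * c))) ≤ 1 := Real.exp_le_one_iff.mpr (neg_nonpos.mpr (by positivity))
      have h2' : (1 : ℝ) ≤ Real.exp (l₁ * (x * c)) := Real.one_le_exp (by positivity)
      rw [ha]
      linarith
    -- denominator bound
    have hden : Real.exp b / 4 ≤ ‖Complex.sinh ((l₂ : ℂ) *
        ((r : ℂ) * Complex.exp ((θ : ℂ) * Complex.I)) ^ (α : ℂ))‖ := by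
      refine le_trans ?_ (le_abs_sinh _)
      rw [hre l₂ r hr]
      have h1 : Real.exp (-(l₂ * (x * c))) ≤ 1 := Real.exp_le_one_iff.mpr (neg_nonpos.mpr (by positivity))
      rw [← hb]
      linarith
    have hrp : 0 ≤ r ^ p := Real.rpow_nonneg hr.le p
    calc r ^ p * ‖Complex.sinh ((l₁ : ℂ) *
            ((r : ℂ) * Complex.exp ((θ : ℂ) * Complex.I)) ^ (α : ℂ))‖ /
          ‖Complex.sinh ((l₂ : ℂ) *
            ((r : ℂ) * Complex.exp ((θ : ℂ) * Complex.I)) ^ (α : ℂ))‖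
        ≤ r ^ p * Real.exp a / (Real.exp b / 4) := by
          apply div_le_div₀ (by positivity) (by gcongr) (by positivity) hden
      _ = 4 * r ^ p * Real.exp (a - b) := by
          rw [Real.exp_sub]; field_simp
      _ = 4 * r ^ p * Real.exp (-(d * x)) := by
          congr 1
          rw [ha, hb, hd]
          ring_nf
end

section
/- Let α ∈ (0,1) and set x̄ = α^(1−α)/((1−α)^(1−α)·α^α). Then for every x > x̄, the quantity (1/(π·(1−α)²·x²)) · ∫_0^π (α − u_α(φ)·x^(1/(1−α))) · u_α(φ)·x^(1/(1−α)) · exp(−u_α(φ)·x^(1/(1−α))) dφ (the derivative of the M-Wright function M_α at x) is strictly negative; consequently M_α is strictly decreasing on (x̄, ∞). -/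
open MeasureTheory Set

lemma aux_sin_concave (c φ : ℝ) (hc : 0 ≤ c) (hc1 : c ≤ 1) (hφ : φ ∈ Set.Icc 0 Real.pi) :
    c * Real.sin φ ≤ Real.sin (c * φ) := by
  have h := strictConcaveOn_sin_Icc.concaveOn.2 hφ
    (show (0:ℝ) ∈ Set.Icc 0 Real.pi by simp [Real.pi_nonneg])
    hc (by linarith : (0:ℝ) ≤ 1 - c) (by ring)
  simpa using h

lemma kernel_pos {α : ℝ} (hα : α ∈ Set.Ioo (0:ℝ) 1) {φ : ℝ} (hφ : φ ∈ Set.Ioo 0 Real.pi) :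
    0 < mwrightKernel α φ := by
  obtain ⟨hα0, hα1⟩ := hα
  obtain ⟨hφ0, hφπ⟩ := hφ
  have hs : 0 < Real.sin φ := Real.sin_pos_of_pos_of_lt_pi hφ0 hφπ
  have hs1 : 0 < Real.sin (α * φ) :=
    Real.sin_pos_of_pos_of_lt_pi (by positivity) (by nlinarith)
  have hs2 : 0 < Real.sin ((1 - α) * φ) :=
    Real.sin_pos_of_pos_of_lt_pi (by nlinarith) (by nlinarith)
  have : 0 < (Real.sin (α * φ) / Real.sin φ) ^ (α / (1 - α)) :=
    Real.rpow_pos_of_pos (by positivity) _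
  unfold mwrightKernel
  positivity

lemma kernel_lb {α : ℝ} (hα : α ∈ Set.Ioo (0:ℝ) 1) {φ : ℝ} (hφ : φ ∈ Set.Ioo 0 Real.pi) :
    (1 - α) * α ^ (α / (1 - α)) ≤ mwrightKernel α φ := by
  obtain ⟨hα0, hα1⟩ := hα
  obtain ⟨hφ0, hφπ⟩ := hφ
  have hs : 0 < Real.sin φ := Real.sin_pos_of_pos_of_lt_pi hφ0 hφπ
  have h1 : α * Real.sin φ ≤ Real.sin (α * φ) :=
    aux_sin_concave α φ hα0.le hα1.le ⟨hφ0.le, hφπ.le⟩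
  have h2 : (1 - α) * Real.sin φ ≤ Real.sin ((1 - α) * φ) :=
    aux_sin_concave (1 - α) φ (by linarith) (by linarith) ⟨hφ0.le, hφπ.le⟩
  have hb1 : α ≤ Real.sin (α * φ) / Real.sin φ := by
    rw [le_div_iff₀ hs]; linarith
  have hb2 : 1 - α ≤ Real.sin ((1 - α) * φ) / Real.sin φ := by
    rw [le_div_iff₀ hs]; linarith
  have hr : α ^ (α / (1 - α)) ≤ (Real.sin (α * φ) / Real.sin φ) ^ (α / (1 - α)) :=
    Real.rpow_le_rpow hα0.le hb1 (div_nonneg hα0.le (by linarith))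
  unfold mwrightKernel
  have : 0 < α ^ (α / (1 - α)) := Real.rpow_pos_of_pos hα0 _
  calc (1 - α) * α ^ (α / (1 - α)) ≤ (1 - α) * (Real.sin (α * φ) / Real.sin φ) ^ (α / (1 - α)) := by
        nlinarith
    _ ≤ (Real.sin (α * φ) / Real.sin φ) ^ (α / (1 - α)) * (Real.sin ((1 - α) * φ) / Real.sin φ) := by
        have hp : 0 ≤ (Real.sin (α * φ) / Real.sin φ) ^ (α / (1 - α)) :=
          Real.rpow_nonneg (le_trans hα0.le hb1) _
        nlinarith

lemma kernel_continuousOn {α : ℝ} (hα : α ∈ Set.Ioo (0:ℝ) 1) :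
    ContinuousOn (mwrightKernel α) (Set.Ioo 0 Real.pi) := by
  obtain ⟨hα0, hα1⟩ := hα
  have hs : ∀ φ ∈ Set.Ioo 0 Real.pi, Real.sin φ ≠ 0 := fun φ hφ =>
    (Real.sin_pos_of_pos_of_lt_pi hφ.1 hφ.2).ne'
  apply ContinuousOn.mul
  · apply ContinuousOn.rpow_const
    · exact (Real.continuous_sin.comp (continuous_const.mul continuous_id)).continuousOn.div
        Real.continuous_sin.continuousOn hs
    · intro x hx; right; exact div_nonneg hα0.le (by linarith)
  · exact (Real.continuous_sin.comp (continuous_const.mul continuous_id)).continuousOn.div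
      Real.continuous_sin.continuousOn hs

lemma integrableOn_of_bounded {f : ℝ → ℝ} {C : ℝ}
    (hf : ContinuousOn f (Set.Ioo 0 Real.pi))
    (hb : ∀ φ ∈ Set.Ioo 0 Real.pi, |f φ| ≤ C) :
    IntegrableOn f (Set.Ioo 0 Real.pi) := by
  refine ⟨hf.aestronglyMeasurable measurableSet_Ioo, ?_⟩
  apply HasFiniteIntegral.of_bounded (C := C)
  filter_upwards [ae_restrict_mem measurableSet_Ioo] with φ hφ
  exact hb φ hφ

lemma aux_s_exp (s : ℝ) (hs : 0 ≤ s) : s * Real.exp (-s) ≤ 1 := by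
  rw [Real.exp_neg, mul_inv_le_iff₀ (Real.exp_pos s)]
  nlinarith [Real.add_one_le_exp s]

lemma aux_sq_exp (s : ℝ) (hs : 0 ≤ s) : s ^ 2 * Real.exp (-s) ≤ 4 := by
  have h1 := aux_s_exp (s / 2) (by linarith)
  have h2 : Real.exp (-(s / 2)) * Real.exp (-(s / 2)) = Real.exp (-s) := by
    rw [← Real.exp_add]; ring_nf
  have h3 : (s / 2 * Real.exp (-(s / 2))) * (s / 2 * Real.exp (-(s / 2))) ≤ 1 :=
    mul_le_one₀ h1 (by positivity) h1
  nlinarith [h3, h2]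

lemma integral_pos_of {f : ℝ → ℝ} (hf : IntegrableOn f (Set.Ioo 0 Real.pi))
    (hpos : ∀ φ ∈ Set.Ioo 0 Real.pi, 0 < f φ) :
    0 < ∫ φ in Set.Ioo 0 Real.pi, f φ := by
  rw [setIntegral_pos_iff_support_of_nonneg_ae ?_ hf]
  · refine lt_of_lt_of_le ?_ (measure_mono (fun φ hφ => ⟨(hpos φ hφ).ne', hφ⟩ :
      Set.Ioo 0 Real.pi ⊆ Function.support f ∩ Set.Ioo 0 Real.pi))
    rw [Real.volume_Ioo]
    simpa using Real.pi_pos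
  · filter_upwards [ae_restrict_mem measurableSet_Ioo] with φ hφ
    exact (hpos φ hφ).le

lemma rpow_xbar {α : ℝ} (hα : α ∈ Set.Ioo (0:ℝ) 1) :
    (α ^ (1 - α) / ((1 - α) ^ (1 - α) * α ^ α)) ^ (1 / (1 - α)) =
      α / ((1 - α) * α ^ (α / (1 - α))) := by
  obtain ⟨hα0, hα1⟩ := hα
  have h1 : (0:ℝ) < 1 - α := by linarith
  have e1 : (1 - α) * (1 / (1 - α)) = 1 := by field_simp
  have e2 : α * (1 / (1 - α)) = α / (1 - α) := by ring
  rw [Real.div_rpow (Real.rpow_nonneg hα0.le _)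
        (mul_nonneg (Real.rpow_nonneg h1.le _) (Real.rpow_nonneg hα0.le _)),
      Real.mul_rpow (Real.rpow_nonneg h1.le _) (Real.rpow_nonneg hα0.le _),
      ← Real.rpow_mul hα0.le, ← Real.rpow_mul h1.le, ← Real.rpow_mul hα0.le,
      e1, e2, Real.rpow_one, Real.rpow_one]

lemma key_lt {α x : ℝ} (hα : α ∈ Set.Ioo (0:ℝ) 1)
    (hx : α ^ (1 - α) / ((1 - α) ^ (1 - α) * α ^ α) < x)
    {φ : ℝ} (hφ : φ ∈ Set.Ioo 0 Real.pi) :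
    α < mwrightKernel α φ * x ^ (1 / (1 - α)) := by
  obtain ⟨hα0, hα1⟩ := hα
  have h1 : (0:ℝ) < 1 - α := by linarith
  have hq : 0 < α ^ (α / (1 - α)) := Real.rpow_pos_of_pos hα0 _
  have hxbar0 : 0 < α ^ (1 - α) / ((1 - α) ^ (1 - α) * α ^ α) := by
    apply div_pos (Real.rpow_pos_of_pos hα0 _)
    exact mul_pos (Real.rpow_pos_of_pos h1 _) (Real.rpow_pos_of_pos hα0 _)
  have hxp : (α ^ (1 - α) / ((1 - α) ^ (1 - α) * α ^ α)) ^ (1 / (1 - α)) < x ^ (1 / (1 - α)) :=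
    Real.rpow_lt_rpow hxbar0.le hx (by positivity)
  rw [rpow_xbar ⟨hα0, hα1⟩] at hxp
  have hk := kernel_lb ⟨hα0, hα1⟩ hφ
  have hxppos : 0 < x ^ (1 / (1 - α)) := Real.rpow_pos_of_pos (lt_trans hxbar0 hx) _
  calc α = ((1 - α) * α ^ (α / (1 - α))) * (α / ((1 - α) * α ^ (α / (1 - α)))) := by
        field_simp
    _ < ((1 - α) * α ^ (α / (1 - α))) * x ^ (1 / (1 - α)) :=
        mul_lt_mul_of_pos_left hxp (mul_pos h1 hq)
    _ ≤ mwrightKernel α φ * x ^ (1 / (1 - α)) :=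
        mul_le_mul_of_nonneg_right hk hxppos.le

lemma per_phi {a u t1 t2 : ℝ} (hu : 0 < u) (ht1 : 0 < t1) (h12 : t1 < t2)
    (ha : 0 ≤ a) (hat : a < u * t1) :
    t2 ^ a * Real.exp (-(u * t2)) < t1 ^ a * Real.exp (-(u * t1)) := by
  have ht2 : 0 < t2 := lt_trans ht1 h12
  rw [Real.rpow_def_of_pos ht1, Real.rpow_def_of_pos ht2, ← Real.exp_add, ← Real.exp_add]
  apply Real.exp_lt_exp.2
  have hd : 0 < (t2 - t1) / t1 := div_pos (by linarith) ht1
  have hlog : Real.log t2 - Real.log t1 ≤ (t2 - t1) / t1 := by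
    have h := Real.log_le_sub_one_of_pos (show 0 < t2 / t1 by positivity)
    rw [Real.log_div ht2.ne' ht1.ne'] at h
    have : t2 / t1 - 1 = (t2 - t1) / t1 := by field_simp
    linarith [this ▸ h]
  have hmul : a * ((t2 - t1) / t1) < (u * t1) * ((t2 - t1) / t1) :=
    mul_lt_mul_of_pos_right hat hd
  have heq : (u * t1) * ((t2 - t1) / t1) = u * (t2 - t1) := by field_simp
  nlinarith [mul_le_mul_of_nonneg_left hlog ha]

/-- The monotonicity claim of Lemma 8.1(iii): with
`xbar = α^(1−α)/((1−α)^(1−α) α^α)`, the derivative expression of `M_α` is strictly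
negative for every `x > xbar`, and consequently `M_α` is strictly decreasing on
`(xbar, ∞)`. -/
theorem mwright_deriv_neg_and_strictAntiOn
    (α : ℝ) (hα : α ∈ Set.Ioo (0:ℝ) 1)
    (xbar : ℝ) (hxbar : xbar = α ^ (1 - α) / ((1 - α) ^ (1 - α) * α ^ α)) :
    (∀ x > xbar,
      (1 / (Real.pi * (1 - α) ^ 2 * x ^ 2)) *
        ∫ φ in Set.Ioo 0 Real.pi,
          (α - mwrightKernel α φ * x ^ (1 / (1 - α))) *
            (mwrightKernel α φ * x ^ (1 / (1 - α))) *
            Real.exp (-(mwrightKernel α φ) * x ^ (1 / (1 - α))) < 0) ∧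
      StrictAntiOn (mwright α) (Set.Ioi xbar) := by
  obtain ⟨hα0, hα1⟩ := hα
  have h1 : (0:ℝ) < 1 - α := by linarith
  have hxbar0 : 0 < xbar := by
    rw [hxbar]
    exact div_pos (Real.rpow_pos_of_pos hα0 _)
      (mul_pos (Real.rpow_pos_of_pos h1 _) (Real.rpow_pos_of_pos hα0 _))
  have hk := kernel_continuousOn ⟨hα0, hα1⟩
  -- integrability of the "derivative" integrand
  have hIntD : ∀ x : ℝ, xbar < x → IntegrableOn
      (fun φ => (α - mwrightKernel α φ * x ^ (1 / (1 - α))) *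
        (mwrightKernel α φ * x ^ (1 / (1 - α))) *
        Real.exp (-(mwrightKernel α φ) * x ^ (1 / (1 - α)))) (Set.Ioo 0 Real.pi) := by
    intro x hx
    apply integrableOn_of_bounded (C := 4)
    · exact ((continuousOn_const.sub (hk.mul continuousOn_const)).mul
        (hk.mul continuousOn_const)).mul ((hk.neg.mul continuousOn_const).rexp)
    · intro φ hφ
      set s := mwrightKernel α φ * x ^ (1 / (1 - α)) with hs
      have hsα : α < s := key_lt ⟨hα0, hα1⟩ (hxbar ▸ hx) hφ
      have hspos : 0 < s := lt_trans hα0 hsα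
      have e1 : -(mwrightKernel α φ) * x ^ (1 / (1 - α)) = -s := by rw [hs]; ring
      rw [e1, abs_mul, abs_mul, abs_of_pos (Real.exp_pos _)]
      have h2 : |α - s| ≤ s := abs_le.2 ⟨by linarith, by linarith⟩
      have h3 : |s| = s := abs_of_pos hspos
      rw [h3]
      have h4 := aux_sq_exp s hspos.le
      nlinarith [Real.exp_pos (-s), mul_le_mul_of_nonneg_right
        (mul_le_mul_of_nonneg_right h2 hspos.le) (Real.exp_pos (-s)).le]
  constructor
  · -- derivative expression negative
    intro x hx
    have hx0 : 0 < x := lt_trans hxbar0 hx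
    have hneg : ∀ φ ∈ Set.Ioo 0 Real.pi,
        (α - mwrightKernel α φ * x ^ (1 / (1 - α))) *
          (mwrightKernel α φ * x ^ (1 / (1 - α))) *
          Real.exp (-(mwrightKernel α φ) * x ^ (1 / (1 - α))) < 0 := by
      intro φ hφ
      have hsα : α < mwrightKernel α φ * x ^ (1 / (1 - α)) := key_lt ⟨hα0, hα1⟩ (hxbar ▸ hx) hφ
      exact mul_neg_of_neg_of_pos
        (mul_neg_of_neg_of_pos (by linarith) (lt_trans hα0 hsα)) (Real.exp_pos _)
    have hIpos := integral_pos_of ((hIntD x hx).neg) (fun φ hφ => neg_pos.2 (hneg φ hφ))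
    simp only [Pi.neg_apply] at hIpos
    rw [integral_neg] at hIpos
    have hfac : 0 < 1 / (Real.pi * (1 - α) ^ 2 * x ^ 2) :=
      one_div_pos.2 (mul_pos (mul_pos Real.pi_pos (pow_pos h1 2)) (pow_pos hx0 2))
    exact mul_neg_of_pos_of_neg hfac (by linarith)
  · -- strict antitonicity
    have hrw : ∀ y : ℝ, mwright α y = 1 / (Real.pi * (1 - α)) *
        ∫ φ in Set.Ioo 0 Real.pi, y ^ (α / (1 - α)) *
          (mwrightKernel α φ * Real.exp (-(mwrightKernel α φ) * y ^ (1 / (1 - α)))) := by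
      intro y
      rw [mwright, integral_const_mul]
      ring
    have hIntG : ∀ y : ℝ, xbar < y → IntegrableOn
        (fun φ => y ^ (α / (1 - α)) *
          (mwrightKernel α φ * Real.exp (-(mwrightKernel α φ) * y ^ (1 / (1 - α)))))
        (Set.Ioo 0 Real.pi) := by
      intro y hy
      have hy0 : 0 < y := lt_trans hxbar0 hy
      have ht : 0 < y ^ (1 / (1 - α)) := Real.rpow_pos_of_pos hy0 _
      apply integrableOn_of_bounded (C := y ^ (α / (1 - α)) * (1 / y ^ (1 / (1 - α))))
      · exact continuousOn_const.mul (hk.mul ((hk.neg.mul continuousOn_const).rexp))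
      · intro φ hφ
        have hu : 0 < mwrightKernel α φ := kernel_pos ⟨hα0, hα1⟩ hφ
        have hq : 0 < y ^ (α / (1 - α)) := Real.rpow_pos_of_pos hy0 _
        have hb : mwrightKernel α φ * Real.exp (-(mwrightKernel α φ) * y ^ (1 / (1 - α)))
            ≤ 1 / y ^ (1 / (1 - α)) := by
          rw [le_div_iff₀ ht]
          have := aux_s_exp (mwrightKernel α φ * y ^ (1 / (1 - α)))
            (by positivity)
          calc mwrightKernel α φ * Real.exp (-(mwrightKernel α φ) * y ^ (1 / (1 - α))) *
                y ^ (1 / (1 - α))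
              = (mwrightKernel α φ * y ^ (1 / (1 - α))) *
                Real.exp (-(mwrightKernel α φ * y ^ (1 / (1 - α)))) := by ring_nf
            _ ≤ 1 := this
        rw [abs_of_nonneg (by positivity)]
        exact mul_le_mul_of_nonneg_left hb hq.le
    intro x1 hx1 x2 hx2 h12
    simp only [Set.mem_Ioi] at hx1 hx2
    have hx10 : 0 < x1 := lt_trans hxbar0 hx1
    have hx20 : 0 < x2 := lt_trans hxbar0 hx2
    have ht12 : x1 ^ (1 / (1 - α)) < x2 ^ (1 / (1 - α)) :=
      Real.rpow_lt_rpow hx10.le h12 (by positivity)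
    have ht1 : 0 < x1 ^ (1 / (1 - α)) := Real.rpow_pos_of_pos hx10 _
    have hptwise : ∀ φ ∈ Set.Ioo 0 Real.pi,
        0 < x1 ^ (α / (1 - α)) *
            (mwrightKernel α φ * Real.exp (-(mwrightKernel α φ) * x1 ^ (1 / (1 - α)))) -
          x2 ^ (α / (1 - α)) *
            (mwrightKernel α φ * Real.exp (-(mwrightKernel α φ) * x2 ^ (1 / (1 - α)))) := by
      intro φ hφ
      have hu : 0 < mwrightKernel α φ := kernel_pos ⟨hα0, hα1⟩ hφ
      have hkey : α < mwrightKernel α φ * x1 ^ (1 / (1 - α)) :=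
        key_lt ⟨hα0, hα1⟩ (hxbar ▸ hx1) hφ
      have hpp := per_phi hu ht1 ht12 hα0.le hkey
      have hmul := mul_lt_mul_of_pos_left hpp hu
      have e1 : x1 ^ (α / (1 - α)) = (x1 ^ (1 / (1 - α))) ^ α := by
        rw [show α / (1 - α) = 1 / (1 - α) * α by ring, Real.rpow_mul hx10.le]
      have e2 : x2 ^ (α / (1 - α)) = (x2 ^ (1 / (1 - α))) ^ α := by
        rw [show α / (1 - α) = 1 / (1 - α) * α by ring, Real.rpow_mul hx20.le]
      rw [e1, e2]
      have e3 : -(mwrightKernel α φ) * x1 ^ (1 / (1 - α)) =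
          -(mwrightKernel α φ * x1 ^ (1 / (1 - α))) := by ring
      have e4 : -(mwrightKernel α φ) * x2 ^ (1 / (1 - α)) =
          -(mwrightKernel α φ * x2 ^ (1 / (1 - α))) := by ring
      rw [e3, e4]
      nlinarith [hmul]
    have hdiff := integral_pos_of (((hIntG x1 hx1)).sub (hIntG x2 hx2)) (by
      intro φ hφ
      simpa using hptwise φ hφ)
    simp only [Pi.sub_apply] at hdiff
    rw [integral_sub (hIntG x1 hx1) (hIntG x2 hx2)] at hdiff
    rw [hrw x1, hrw x2]
    have hfac : 0 < 1 / (Real.pi * (1 - α)) :=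
      one_div_pos.2 (mul_pos Real.pi_pos h1)
    have := mul_lt_mul_of_pos_left (show
      (∫ φ in Set.Ioo 0 Real.pi, x2 ^ (α / (1 - α)) *
        (mwrightKernel α φ * Real.exp (-(mwrightKernel α φ) * x2 ^ (1 / (1 - α))))) <
      ∫ φ in Set.Ioo 0 Real.pi, x1 ^ (α / (1 - α)) *
        (mwrightKernel α φ * Real.exp (-(mwrightKernel α φ) * x1 ^ (1 / (1 - α))))
      by linarith) hfac
    exact this
end

section
/- For every α ∈ (0,1), the M-Wright function M_α(x) tends to 0 as x → ∞. -/
open Filter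

lemma mwrightKernel_nonneg {α : ℝ} (hα : α ∈ Set.Ioo (0:ℝ) 1) {φ : ℝ}
    (hφ : φ ∈ Set.Ioo 0 Real.pi) : 0 ≤ mwrightKernel α φ := by
  obtain ⟨hα0, hα1⟩ := hα
  obtain ⟨hφ0, hφπ⟩ := hφ
  have hs : 0 < Real.sin φ := Real.sin_pos_of_pos_of_lt_pi hφ0 hφπ
  have h1 : 0 < Real.sin (α * φ) :=
    Real.sin_pos_of_pos_of_lt_pi (by positivity) (by nlinarith)
  have h2 : 0 ≤ Real.sin ((1 - α) * φ) :=
    Real.sin_nonneg_of_nonneg_of_le_pi (by nlinarith) (by nlinarith)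
  unfold mwrightKernel
  positivity

lemma aux_exp_bound {s : ℝ} (hs : 0 ≤ s) : s * Real.exp (-s) ≤ (Real.exp 1)⁻¹ := by
  have h := Real.add_one_le_exp (s - 1)
  have he : Real.exp (s - 1) = Real.exp s * (Real.exp 1)⁻¹ := by
    rw [Real.exp_sub]; ring
  have hs' : s ≤ Real.exp s * (Real.exp 1)⁻¹ := by rw [← he]; linarith
  have hmul : Real.exp s * Real.exp (-s) = 1 := by
    rw [← Real.exp_add]; simp
  have := mul_le_mul_of_nonneg_right hs' (Real.exp_nonneg (-s))
  calc s * Real.exp (-s) ≤ Real.exp s * (Real.exp 1)⁻¹ * Real.exp (-s) := this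
    _ = (Real.exp s * Real.exp (-s)) * (Real.exp 1)⁻¹ := by ring
    _ = (Real.exp 1)⁻¹ := by rw [hmul, one_mul]

/-- Decay at infinity of the M-Wright function: `M_α(x) → 0` as `x → ∞`. -/
theorem mwright_tendsto_zero
    (α : ℝ) (hα : α ∈ Set.Ioo (0:ℝ) 1) :
    Tendsto (mwright α) atTop (nhds 0) := by
  obtain ⟨hα0, hα1⟩ := hα
  have h1α : 0 < 1 - α := by linarith
  have hπ : (0:ℝ) < Real.pi := Real.pi_pos
  have he : (0:ℝ) < Real.exp 1 := Real.exp_pos 1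
  rw [tendsto_zero_iff_norm_tendsto_zero]
  have hg : Tendsto (fun x : ℝ => ((1 - α) * Real.exp 1)⁻¹ * x⁻¹) atTop (nhds 0) := by
    have := tendsto_inv_atTop_zero.const_mul (((1 - α) * Real.exp 1)⁻¹)
    simpa using this
  refine squeeze_zero' (Filter.Eventually.of_forall fun x => norm_nonneg _) ?_ hg
  filter_upwards [eventually_gt_atTop (0:ℝ)] with x hx
  set y := x ^ (1 / (1 - α)) with hy_def
  have hy : 0 < y := Real.rpow_pos_of_pos hx _
  set C : ℝ := (Real.exp 1)⁻¹ / y with hC_def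
  -- pointwise bound on the integrand
  have hbound : ∀ φ ∈ Set.Ioo 0 Real.pi,
      ‖mwrightKernel α φ * Real.exp (-(mwrightKernel α φ) * y)‖ ≤ C := by
    intro φ hφ
    have hK : 0 ≤ mwrightKernel α φ := mwrightKernel_nonneg ⟨hα0, hα1⟩ hφ
    set K := mwrightKernel α φ
    have h1 : K * Real.exp (-(K * y)) ≤ C := by
      have hkey := aux_exp_bound (mul_nonneg hK hy.le)
      rw [hC_def, le_div_iff₀ hy]
      calc K * Real.exp (-(K * y)) * y = K * y * Real.exp (-(K * y)) := by ring
        _ ≤ (Real.exp 1)⁻¹ := hkey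
    have : -K * y = -(K * y) := by ring
    rw [this, Real.norm_eq_abs, abs_of_nonneg (by positivity)]
    exact h1
  have hint : ‖∫ φ in Set.Ioo 0 Real.pi,
      mwrightKernel α φ * Real.exp (-(mwrightKernel α φ) * y)‖ ≤ C * Real.pi := by
    have hvol : (MeasureTheory.volume (Set.Ioo (0:ℝ) Real.pi)).toReal = Real.pi := by
      rw [Real.volume_Ioo]
      simp [ENNReal.toReal_ofReal hπ.le]
    have := MeasureTheory.norm_setIntegral_le_of_norm_le_const
      (by rw [Real.volume_Ioo]; exact ENNReal.ofReal_lt_top)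
      hbound
    rwa [MeasureTheory.measureReal_def, hvol] at this
  have hcoef : 0 ≤ x ^ (α / (1 - α)) / (Real.pi * (1 - α)) := by positivity
  have hpow : x ^ (α / (1 - α)) / y = x⁻¹ := by
    rw [hy_def, ← Real.rpow_sub hx]
    have : α / (1 - α) - 1 / (1 - α) = -1 := by
      field_simp
      ring
    rw [this, Real.rpow_neg_one]
  calc ‖mwright α x‖
      = x ^ (α / (1 - α)) / (Real.pi * (1 - α)) *
        ‖∫ φ in Set.Ioo 0 Real.pi,
          mwrightKernel α φ * Real.exp (-(mwrightKernel α φ) * y)‖ := by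
        rw [mwright, norm_mul, Real.norm_eq_abs (x ^ (α / (1 - α)) / (Real.pi * (1 - α))),
          abs_of_nonneg hcoef]
    _ ≤ x ^ (α / (1 - α)) / (Real.pi * (1 - α)) * (C * Real.pi) :=
        mul_le_mul_of_nonneg_left hint hcoef
    _ = ((1 - α) * Real.exp 1)⁻¹ * (x ^ (α / (1 - α)) / y) := by
        rw [hC_def]; field_simp
    _ = ((1 - α) * Real.exp 1)⁻¹ * x⁻¹ := by rw [hpow]
end
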